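/- arXiv:0903.4067 — 9 statements merged into one kernel-verified Lean document; each statement's English description precedes it below -/
import Mathlib

section
/- Let k be a field of characteristic 0 and n ≥ 1, and consider the Lie algebra t_{n+1} of infinitesimal braids with indices in {0, 1, …, n}. Let f be the Lie subalgebra of t_{n+1} generated by the elements t_{01}, …, t_{0n}. Then for every a ∈ t_{n+1} there exists a_0 ∈ f such that ⁅a, t_{01} + t_{02} + ⋯ + t_{0n}⁆ = ⁅a_0, t_{01} + t_{02} + ⋯ + t_{0n}⁆. -/
/-!
The Lie algebra `t_N` of infinitesimal braids over a field `k` of characteristic 0: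
quotient of the free Lie algebra on generators `T (i,j)` (for `i ≠ j` in `Fin N`)
by the Lie ideal generated by the symmetry relations `T (i,j) - T (j,i)`, the
relations `⁅T (i,j), T (i,l) + T (j,l)⁆` for distinct `i, j, l` and
`⁅T (i,j), T (l,m)⁆` for distinct `i, j, k, l`.
-/

/-- Index type for the generators `T_{ij}` of `t_N`. -/
abbrev tGenIdx (N : ℕ) := {p : Fin N × Fin N // p.1 ≠ p.2}

/-- The free generator `T_{ij}`. -/
noncomputable def Tgen (k : Type) [Field k] [CharZero k] {N : ℕ} (i j : Fin N) (h : i ≠ j) :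
    FreeLieAlgebra k (tGenIdx N) :=
  FreeLieAlgebra.of k ⟨(i, j), h⟩

/-- The defining relations of the infinitesimal braid Lie algebra. -/
def tRels (k : Type) [Field k] [CharZero k] (N : ℕ) :
    Set (FreeLieAlgebra k (tGenIdx N)) :=
  { x |
    (∃ (i j : Fin N) (h : i ≠ j),
        x = Tgen k i j h - Tgen k j i h.symm) ∨
    (∃ (i j l : Fin N) (h₁ : i ≠ j) (h₂ : i ≠ l) (h₃ : j ≠ l),
        x = ⁅Tgen k i j h₁, Tgen k i l h₂ + Tgen k j l h₃⁆) ∨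
    (∃ (i j l m : Fin N) (h₁ : i ≠ j) (h₂ : l ≠ m),
        i ≠ l ∧ i ≠ m ∧ j ≠ l ∧ j ≠ m ∧
        x = ⁅Tgen k i j h₁, Tgen k l m h₂⁆) }

/-- The Lie ideal generated by the infinitesimal braid relations. -/
noncomputable def tIdeal (k : Type) [Field k] [CharZero k] (N : ℕ) :
    LieIdeal k (FreeLieAlgebra k (tGenIdx N)) :=
  LieSubmodule.lieSpan k _ (tRels k N)

/-- The Lie algebra `t_N` of infinitesimal braids. -/
abbrev tAlg (k : Type) [Field k] [CharZero k] (N : ℕ) :=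
  FreeLieAlgebra k (tGenIdx N) ⧸ tIdeal k N

/-- The generator `t_{ab}` of `t_N` (junk value `0` if `a = b`). -/
noncomputable def tt (k : Type) [Field k] [CharZero k] {N : ℕ} (a b : Fin N) :
    tAlg k N :=
  if h : a ≠ b then LieSubmodule.Quotient.mk' (tIdeal k N) (Tgen k a b h) else 0


/-!
The subalgebra `f` is an ideal: bracketing `t_{ij}` with `t_{0m}` lands in `f`, either because
one of `i, j` is `0`, or by the relation `⁅t_{0i}, t_{0j} + t_{ij}⁆ = 0` when `m ∈ {i, j}`, or
because the bracket vanishes. For `i, j ≠ 0`, `t_{ij}` commutes with `C = ∑ m, t_{0m}`, which is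
the relation `⁅t_{ij}, t_{i0} + t_{j0}⁆ = 0` after discarding the vanishing brackets. Hence every
generator of `t_{n+1}` lies in `f` or in the centralizer of `C`, so `t_{n+1} = f + z(C)`, and
writing `a = a₀ + z` with `a₀ ∈ f`, `⁅z, C⁆ = 0` gives the claim.
-/

namespace LieSubalgebra

variable {R L : Type*} [CommRing R] [LieRing L] [LieAlgebra R L]

theorem mem_normalizer_lieSpan {s : Set L} {x : L} (h : ∀ y ∈ s, ⁅x, y⁆ ∈ lieSpan R L s) :
    x ∈ (lieSpan R L s).normalizer := by
  rw [mem_normalizer_iff]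
  intro y hy
  induction hy using lieSpan_induction with
  | mem y hy => exact h y hy
  | zero => rw [lie_zero]; exact zero_mem _
  | add y z _ _ hy hz => rw [lie_add]; exact add_mem hy hz
  | smul r y _ hy => rw [lie_smul]; exact SMulMemClass.smul_mem r hy
  | lie y z hy' hz' hy hz =>
    rw [leibniz_lie]
    exact add_mem (lie_mem _ hy hz') (lie_mem _ hy' hz)

theorem normalizer_lieSpan_eq_top {s t : Set L} (ht : lieSpan R L t = ⊤)
    (h : ∀ x ∈ t, ∀ y ∈ s, ⁅x, y⁆ ∈ lieSpan R L s) :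
    (lieSpan R L s).normalizer = ⊤ := by
  rw [eq_top_iff, ← ht, lieSpan_le]
  exact fun x hx => mem_normalizer_lieSpan (h x hx)

theorem exists_add_eq_of_mem_sup {H K : LieSubalgebra R L} (hH : H.normalizer = ⊤) {x : L}
    (hx : x ∈ H ⊔ K) : ∃ y ∈ H, ∃ z ∈ K, y + z = x := by
  have lie_mem_right (u v : L) (hv : v ∈ H) : ⁅u, v⁆ ∈ H :=
    (mem_normalizer_iff H u).mp (hH ▸ mem_top u) v hv
  have lie_mem_left (u v : L) (hv : v ∈ H) : ⁅v, u⁆ ∈ H := by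
    rw [← lie_skew]
    exact neg_mem (lie_mem_right u v hv)
  let S : LieSubalgebra R L :=
    { H.toSubmodule ⊔ K.toSubmodule with
      lie_mem' := fun {u v} hu hv => by
        obtain ⟨y, hy, z, hz, rfl⟩ := Submodule.mem_sup.mp hu
        obtain ⟨y', hy', z', hz', rfl⟩ := Submodule.mem_sup.mp hv
        rw [add_lie, lie_add z, ← add_assoc]
        exact Submodule.add_mem_sup
          (add_mem (lie_mem_left _ y hy) (lie_mem_right z y' hy'))
          (K.lie_mem hz hz') }
  have hS : H ⊔ K ≤ S := sup_le (fun y hy => Submodule.mem_sup_left hy)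
    (fun z hz => Submodule.mem_sup_right hz)
  exact Submodule.mem_sup.mp (hS hx)

variable (R) in
def centralizer (c : L) : LieSubalgebra R L where
  carrier := {x | ⁅x, c⁆ = 0}
  add_mem' {x y} (hx : ⁅x, c⁆ = 0) (hy : ⁅y, c⁆ = 0) :=
    show ⁅x + y, c⁆ = 0 by rw [add_lie, hx, hy, add_zero]
  zero_mem' := zero_lie c
  smul_mem' r x (hx : ⁅x, c⁆ = 0) := show ⁅r • x, c⁆ = 0 by rw [smul_lie, hx, smul_zero]
  lie_mem' {x y} (hx : ⁅x, c⁆ = 0) (hy : ⁅y, c⁆ = 0) :=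
    show ⁅⁅x, y⁆, c⁆ = 0 by rw [lie_lie, hx, hy, lie_zero, lie_zero, sub_zero]

theorem mem_centralizer {c x : L} : x ∈ centralizer R c ↔ ⁅x, c⁆ = 0 := Iff.rfl

end LieSubalgebra

theorem FreeLieAlgebra.lieSpan_range_of (R X : Type*) [CommRing R] :
    LieSubalgebra.lieSpan R (FreeLieAlgebra R X) (Set.range (of R)) = ⊤ := by
  let K := LieSubalgebra.lieSpan R (FreeLieAlgebra R X) (Set.range (of R))
  let F : FreeLieAlgebra R X →ₗ⁅R⁆ K :=
    lift R fun x => ⟨of R x, LieSubalgebra.subset_lieSpan ⟨x, rfl⟩⟩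
  have hF : K.incl.comp F = LieHom.id := hom_ext fun x => by simp [F]
  rw [eq_top_iff]
  intro y _
  rw [← LieHom.id_apply (R := R) y, ← hF]
  exact (F y).2

section InfinitesimalBraids

variable (k : Type) [Field k] [CharZero k] {N : ℕ}

theorem tt_of_ne {a b : Fin N} (h : a ≠ b) :
    tt k a b = LieSubmodule.Quotient.mk' (tIdeal k N) (Tgen k a b h) := by
  rw [tt, dif_pos h]

theorem mk'_eq_zero_of_mem_tRels {x : FreeLieAlgebra k (tGenIdx N)} (hx : x ∈ tRels k N) :
    LieSubmodule.Quotient.mk' (tIdeal k N) x = 0 :=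
  (LieSubmodule.Quotient.mk_eq_zero _).mpr (LieSubmodule.subset_lieSpan hx)

theorem tt_self (a : Fin N) : tt k a a = 0 := by
  rw [tt, dif_neg (not_not.mpr rfl)]

theorem tt_comm (a b : Fin N) : tt k a b = tt k b a := by
  rcases eq_or_ne a b with rfl | h
  · rfl
  · rw [tt_of_ne k h, tt_of_ne k h.symm, ← sub_eq_zero, ← map_sub]
    exact mk'_eq_zero_of_mem_tRels k (Or.inl ⟨a, b, h, rfl⟩)

theorem lie_tt_add_tt (i j l : Fin N) : ⁅tt k i j, tt k i l + tt k j l⁆ = 0 := by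
  rcases eq_or_ne i j with rfl | hij
  · rw [tt_self, zero_lie]
  rcases eq_or_ne i l with rfl | hil
  · rw [tt_self, zero_add, tt_comm k j i, lie_self]
  rcases eq_or_ne j l with rfl | hjl
  · rw [tt_self, add_zero, lie_self]
  rw [tt_of_ne k hij, tt_of_ne k hil, tt_of_ne k hjl, ← map_add, LieSubmodule.Quotient.mk'_apply,
    LieSubmodule.Quotient.mk'_apply, ← LieSubmodule.Quotient.mk_bracket]
  exact mk'_eq_zero_of_mem_tRels k (Or.inr (Or.inl ⟨i, j, l, hij, hil, hjl, rfl⟩))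

theorem lie_tt_tt_of_ne {i j l m : Fin N} (hil : i ≠ l) (him : i ≠ m) (hjl : j ≠ l)
    (hjm : j ≠ m) : ⁅tt k i j, tt k l m⁆ = 0 := by
  rcases eq_or_ne i j with rfl | hij
  · rw [tt_self, zero_lie]
  rcases eq_or_ne l m with rfl | hlm
  · rw [tt_self, lie_zero]
  rw [tt_of_ne k hij, tt_of_ne k hlm, LieSubmodule.Quotient.mk'_apply,
    LieSubmodule.Quotient.mk'_apply, ← LieSubmodule.Quotient.mk_bracket]
  exact mk'_eq_zero_of_mem_tRels k
    (Or.inr (Or.inr ⟨i, j, l, m, hij, hlm, hil, him, hjl, hjm, rfl⟩))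

theorem lieSpan_tt_eq_top :
    LieSubalgebra.lieSpan k (tAlg k N) {x | ∃ i j, x = tt k i j} = ⊤ := by
  rw [eq_top_iff]
  rintro x -
  obtain ⟨y, rfl⟩ := LieSubmodule.Quotient.surjective_mk' (tIdeal k N) x
  have hy : y ∈ LieSubalgebra.lieSpan k _ (Set.range (FreeLieAlgebra.of k)) := by
    rw [FreeLieAlgebra.lieSpan_range_of]; trivial
  induction hy using LieSubalgebra.lieSpan_induction with
  | mem _ hy =>
    obtain ⟨⟨⟨i, j⟩, h⟩, rfl⟩ := hy
    exact LieSubalgebra.subset_lieSpan ⟨i, j, (tt_of_ne k h).symm⟩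
  | zero => rw [map_zero]; exact zero_mem _
  | add _ _ _ _ hy hz => rw [map_add]; exact add_mem hy hz
  | smul r _ _ hy => rw [map_smul]; exact SMulMemClass.smul_mem r hy
  | lie _ _ _ _ hy hz =>
    rw [LieSubmodule.Quotient.mk'_apply, LieSubmodule.Quotient.mk_bracket]
    exact LieSubalgebra.lie_mem _ hy hz

variable (n : ℕ)

noncomputable abbrev tZeroSubalgebra : LieSubalgebra k (tAlg k (n + 1)) :=
  LieSubalgebra.lieSpan k (tAlg k (n + 1)) {x | ∃ i : Fin n, x = tt k 0 i.succ}

variable {n}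

theorem tt_zero_mem_tZeroSubalgebra (j : Fin (n + 1)) : tt k 0 j ∈ tZeroSubalgebra k n := by
  rcases Fin.eq_zero_or_eq_succ j with rfl | ⟨m, rfl⟩
  · rw [tt_self]; exact zero_mem _
  · exact LieSubalgebra.subset_lieSpan ⟨m, rfl⟩

theorem lie_tt_tt_zero_self_mem (i j : Fin (n + 1)) :
    ⁅tt k i j, tt k 0 i⁆ ∈ tZeroSubalgebra k n := by
  have h := lie_tt_add_tt k 0 i j
  rw [lie_add, add_eq_zero_iff_eq_neg] at h
  rw [← lie_skew, ← h]
  exact LieSubalgebra.lie_mem _ (tt_zero_mem_tZeroSubalgebra k i) (tt_zero_mem_tZeroSubalgebra k j)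

theorem lie_tt_tt_zero_mem (i j m : Fin (n + 1)) :
    ⁅tt k i j, tt k 0 m⁆ ∈ tZeroSubalgebra k n := by
  have hm := tt_zero_mem_tZeroSubalgebra k m
  rcases eq_or_ne i 0 with rfl | hi
  · exact LieSubalgebra.lie_mem _ (tt_zero_mem_tZeroSubalgebra k j) hm
  rcases eq_or_ne j 0 with rfl | hj
  · rw [tt_comm]; exact LieSubalgebra.lie_mem _ (tt_zero_mem_tZeroSubalgebra k i) hm
  rcases eq_or_ne i m with rfl | him
  · exact lie_tt_tt_zero_self_mem k i j
  rcases eq_or_ne j m with rfl | hjm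
  · rw [tt_comm k i]; exact lie_tt_tt_zero_self_mem k j i
  rw [lie_tt_tt_of_ne k hi him hj hjm]
  exact zero_mem _

theorem normalizer_tZeroSubalgebra : (tZeroSubalgebra k n).normalizer = ⊤ :=
  LieSubalgebra.normalizer_lieSpan_eq_top (lieSpan_tt_eq_top k) <| by
    rintro - ⟨i, j, rfl⟩ - ⟨m, rfl⟩
    exact lie_tt_tt_zero_mem k i j m.succ

theorem sum_tt_zero_succ :
    ∑ i : Fin n, tt k (0 : Fin (n + 1)) i.succ = ∑ m : Fin (n + 1), tt k 0 m := by
  rw [Fin.sum_univ_succ, tt_self, zero_add]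

theorem lie_tt_sum_tt_zero {i j : Fin (n + 1)} (hi : i ≠ 0) (hj : j ≠ 0) :
    ⁅tt k i j, ∑ m : Fin (n + 1), tt k 0 m⁆ = 0 := by
  rcases eq_or_ne i j with rfl | hij
  · rw [tt_self, zero_lie]
  have hvanish (m : Fin (n + 1)) (hm : m ≠ i ∧ m ≠ j) : ⁅tt k i j, tt k 0 m⁆ = 0 :=
    lie_tt_tt_of_ne k hi hm.1.symm hj hm.2.symm
  rw [lie_sum, Fintype.sum_eq_add i j hij hvanish, ← lie_add, tt_comm k 0 i, tt_comm k 0 j]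
  exact lie_tt_add_tt k i j 0

theorem tt_mem_sup_centralizer (i j : Fin (n + 1)) :
    tt k i j ∈
      tZeroSubalgebra k n ⊔ LieSubalgebra.centralizer k (∑ m : Fin (n + 1), tt k 0 m) := by
  rcases eq_or_ne i 0 with rfl | hi
  · exact le_sup_left (α := LieSubalgebra k _) (tt_zero_mem_tZeroSubalgebra k j)
  rcases eq_or_ne j 0 with rfl | hj
  · rw [tt_comm]; exact le_sup_left (α := LieSubalgebra k _) (tt_zero_mem_tZeroSubalgebra k i)
  exact le_sup_right (α := LieSubalgebra k _) (lie_tt_sum_tt_zero k hi hj)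

end InfinitesimalBraids

theorem lemma_8_3_general (k : Type) [Field k] [CharZero k] (n : ℕ)
    (a : tAlg k (n + 1)) :
    ∃ a₀ ∈ LieSubalgebra.lieSpan k (tAlg k (n + 1))
        {x | ∃ i : Fin n, x = tt k 0 i.succ},
      ⁅a, ∑ i : Fin n, tt k (0 : Fin (n + 1)) i.succ⁆ =
        ⁅a₀, ∑ i : Fin n, tt k (0 : Fin (n + 1)) i.succ⁆ := by
  have ha : a ∈ tZeroSubalgebra k n ⊔ LieSubalgebra.centralizer k (∑ m, tt k 0 m) := by
    refine LieSubalgebra.lieSpan_le.mpr ?_ (lieSpan_tt_eq_top k ▸ LieSubalgebra.mem_top a)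
    rintro - ⟨i, j, rfl⟩
    exact tt_mem_sup_centralizer k i j
  obtain ⟨a₀, ha₀, z, hz, rfl⟩ :=
    LieSubalgebra.exists_add_eq_of_mem_sup (normalizer_tZeroSubalgebra k) ha
  refine ⟨a₀, ha₀, ?_⟩
  rw [sum_tt_zero_succ, add_lie, LieSubalgebra.mem_centralizer.mp hz, add_zero]

/-- Lemma 8.3 (Lie-algebra content): for every `a` in the infinitesimal braid Lie
algebra `t_{n+1}` (indices `{0, 1, …, n}`), there is an element `a₀` of the Lie
subalgebra `f` generated by `t_{01}, …, t_{0n}` with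
`⁅a, t_{01} + ⋯ + t_{0n}⁆ = ⁅a₀, t_{01} + ⋯ + t_{0n}⁆`. -/
theorem lemma_8_3 (k : Type) [Field k] [CharZero k] (n : ℕ) (hn : 1 ≤ n)
    (a : tAlg k (n + 1)) :
    ∃ a₀ ∈ LieSubalgebra.lieSpan k (tAlg k (n + 1))
        {x | ∃ i : Fin n, x = tt k 0 i.succ},
      ⁅a, ∑ i : Fin n, tt k (0 : Fin (n + 1)) i.succ⁆ =
        ⁅a₀, ∑ i : Fin n, tt k (0 : Fin (n + 1)) i.succ⁆ :=
  lemma_8_3_general k n a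
end

section
/- Let M > 0 and let α ∈ ℝ⟦r⟧ be a formal power series with zero constant term, all coefficients nonnegative, and positive radius of convergence (i.e., there exists ρ > 0 with Σ_n |α_n| ρ^n < ∞). Then: (i) there exists a unique formal power series γ ∈ ℝ⟦r⟧ with zero constant term satisfying the functional equation γ = α(r·e^{Mγ(r)}), i.e. γ equals the substitution of the series r·exp(M·γ) (where exp(M·γ) := Σ_{k≥0} (M·γ)^k / k!) into α; and (ii) this γ has nonnegative coefficients and positive radius of convergence. -/
open PowerSeries

/-- Composition `f(g)` of formal power series: when `g` has zero constant term this
is the usual substitution of `g` into `f`, computed coefficientwise by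
`coeff n (f(g)) = ∑_{i ≤ n} (coeff i f) · coeff n (g^i)`
(the terms with `i > n` vanish since `g` has zero constant term). -/
noncomputable def psComp (f g : PowerSeries ℝ) : PowerSeries ℝ :=
  PowerSeries.mk fun n =>
    ∑ i ∈ Finset.range (n + 1), PowerSeries.coeff i f * PowerSeries.coeff n (g ^ i)

/-!
The map `Φ γ = α(X·e^{Mγ})` is a contraction for the `X`-adic metric: thanks to the factor `X`,
the `n`-th coefficient of `Φ γ` only depends on the coefficients of `γ` below `n`. Hence `Φ` has
a unique fixed point, the coefficientwise limit of the iterates `Φ^[k] 0`, and since `Φ` preserves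
nonnegativity of coefficients, so does the fixed point.

For convergence, write `γ_{<n}` for the truncation of `γ` below degree `n`. With nonnegative
coefficients, evaluating truncations at `t ≥ 0` is submultiplicative, which gives
`γ_{<n+1}(t) ≤ α_{<n+1}(x)` with `x ≤ t·exp(M γ_{<n}(t))`. As `α(0) = 0`, for `x ≤ ρ` we have
`α_{<n+1}(x) ≤ (x/ρ)·α(ρ)`, so choosing `t·e^M = ρ/(1 + α(ρ))` propagates the bound
`γ_{<n}(t) ≤ 1` by induction on `n`; bounded partial sums give convergence at `t`.
-/

open Finset Function Set

section Trunc

variable {R : Type*} [CommSemiring R]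

theorem coeff_eq_of_trunc_eq {n m : ℕ} {f g : R⟦X⟧} (h : trunc n f = trunc n g)
    (hm : m < n) : coeff m f = coeff m g := by
  rw [← coeff_coe_trunc_of_lt hm, h, coeff_coe_trunc_of_lt hm]

theorem trunc_eq_of_forall_coeff_eq {n : ℕ} {f g : R⟦X⟧}
    (h : ∀ m < n, coeff m f = coeff m g) : trunc n f = trunc n g := by
  ext m
  simp only [coeff_trunc]
  split_ifs with hm
  exacts [h m hm, rfl]

theorem trunc_succ_X_mul (n : ℕ) (f : R⟦X⟧) :
    trunc (n + 1) (X * f) = Polynomial.X * trunc n f := by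
  ext m
  rcases m with _ | m
  · simp [coeff_trunc]
  · simp [coeff_trunc, coeff_succ_X_mul]

theorem eval_trunc_eq_sum (n : ℕ) (f : R⟦X⟧) (t : R) :
    (trunc n f).eval t = ∑ i ∈ range n, coeff i f * t ^ i :=
  eval₂_trunc_eq_sum_range t (RingHom.id R) n f

def IsXAdicContraction (Φ : R⟦X⟧ → R⟦X⟧) : Prop :=
  ∀ n f g, trunc n f = trunc n g → trunc (n + 1) (Φ f) = trunc (n + 1) (Φ g)

namespace IsXAdicContraction

variable {Φ : R⟦X⟧ → R⟦X⟧}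

theorem trunc_iterate_congr (hΦ : IsXAdicContraction Φ) (k : ℕ) (f g : R⟦X⟧) :
    trunc k (Φ^[k] f) = trunc k (Φ^[k] g) := by
  induction k with
  | zero => rfl
  | succ k ih => simpa only [iterate_succ_apply'] using hΦ k _ _ ih

theorem coeff_iterate_eq_of_lt (hΦ : IsXAdicContraction Φ) {m k : ℕ} (hmk : m < k)
    (f g : R⟦X⟧) : coeff m (Φ^[k] f) = coeff m (Φ^[m + 1] g) := by
  obtain ⟨j, rfl⟩ := Nat.exists_eq_add_of_lt hmk
  rw [add_right_comm, iterate_add_apply]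
  exact coeff_eq_of_trunc_eq (hΦ.trunc_iterate_congr _ _ _) m.lt_succ_self

theorem coeff_eq_of_isFixedPt (hΦ : IsXAdicContraction Φ) {γ : R⟦X⟧} (hγ : IsFixedPt Φ γ)
    (n : ℕ) (f : R⟦X⟧) : coeff n γ = coeff n (Φ^[n + 1] f) := by
  conv_lhs => rw [← iterate_fixed hγ (n + 1)]
  exact hΦ.coeff_iterate_eq_of_lt n.lt_succ_self _ _

theorem existsUnique_isFixedPt (hΦ : IsXAdicContraction Φ) : ∃! γ : R⟦X⟧, IsFixedPt Φ γ := by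
  set γ : R⟦X⟧ := mk fun n => coeff n (Φ^[n + 1] 0)
  have htrunc (n : ℕ) : trunc n γ = trunc n (Φ^[n] 0) :=
    trunc_eq_of_forall_coeff_eq fun m hm => by
      rw [coeff_mk, hΦ.coeff_iterate_eq_of_lt hm]
  refine ⟨γ, ext fun n => ?_, fun γ' hγ' => ext fun n => ?_⟩
  · rw [coeff_eq_of_trunc_eq (hΦ n _ _ (htrunc n)) n.lt_succ_self, ← iterate_succ_apply' Φ,
      coeff_mk]
  · rw [hΦ.coeff_eq_of_isFixedPt hγ' n 0, coeff_mk]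

end IsXAdicContraction

end Trunc

section NonnegCoeffs

variable (R : Type*) [CommSemiring R] [PartialOrder R] [IsOrderedRing R]

def nonnegCoeffs : Subsemiring R⟦X⟧ where
  carrier := {f | ∀ n, 0 ≤ coeff n f}
  zero_mem' _ := by simp
  one_mem' n := by
    rw [coeff_one]
    split_ifs <;> simp
  add_mem' hf hg n := by
    rw [map_add]
    exact add_nonneg (hf n) (hg n)
  mul_mem' hf hg n := by
    rw [coeff_mul]
    exact sum_nonneg fun p _ => mul_nonneg (hf p.1) (hg p.2)

variable {R} {f g : R⟦X⟧} {t : R}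

theorem X_mem_nonnegCoeffs : (X : R⟦X⟧) ∈ nonnegCoeffs R := fun n => by
  rw [coeff_X]
  split_ifs <;> simp

theorem smul_mem_nonnegCoeffs {a : R} (ha : 0 ≤ a) (hf : f ∈ nonnegCoeffs R) :
    a • f ∈ nonnegCoeffs R := fun n => by
  rw [map_smul, smul_eq_mul]
  exact mul_nonneg ha (hf n)

theorem coe_trunc_mem_nonnegCoeffs (hf : f ∈ nonnegCoeffs R) (n : ℕ) :
    (trunc n f : R⟦X⟧) ∈ nonnegCoeffs R := fun m => by
  rw [Polynomial.coeff_coe, coeff_trunc]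
  split_ifs
  exacts [hf m, le_rfl]

theorem IsXAdicContraction.mem_nonnegCoeffs_of_isFixedPt {Φ : R⟦X⟧ → R⟦X⟧}
    (hΦ : IsXAdicContraction Φ) (hmaps : MapsTo Φ (nonnegCoeffs R) (nonnegCoeffs R))
    {γ : R⟦X⟧} (hγ : IsFixedPt Φ γ) : γ ∈ nonnegCoeffs R := fun n => by
  rw [hΦ.coeff_eq_of_isFixedPt hγ n 0]
  exact hmaps.iterate (n + 1) (nonnegCoeffs R).zero_mem n

theorem eval_trunc_nonneg (hf : f ∈ nonnegCoeffs R) (ht : 0 ≤ t) (n : ℕ) :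
    0 ≤ (trunc n f).eval t := by
  rw [eval_trunc_eq_sum]
  exact sum_nonneg fun i _ => mul_nonneg (hf i) (pow_nonneg ht i)

theorem eval_trunc_mono (hf : f ∈ nonnegCoeffs R) (ht : 0 ≤ t) {n m : ℕ} (hnm : n ≤ m) :
    (trunc n f).eval t ≤ (trunc m f).eval t := by
  rw [eval_trunc_eq_sum, eval_trunc_eq_sum]
  exact sum_le_sum_of_subset_of_nonneg (range_subset_range.mpr hnm)
    fun i _ _ => mul_nonneg (hf i) (pow_nonneg ht i)

theorem eval_trunc_pow_le (hg : g ∈ nonnegCoeffs R) (ht : 0 ≤ t) (n i : ℕ) :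
    (trunc n (g ^ i)).eval t ≤ (trunc n g).eval t ^ i := by
  set p := trunc n g
  have hp : (p : R⟦X⟧) ^ i ∈ nonnegCoeffs R := pow_mem (coe_trunc_mem_nonnegCoeffs hg n) i
  calc (trunc n (g ^ i)).eval t
      = (trunc n ((p : R⟦X⟧) ^ i)).eval t := by rw [trunc_trunc_pow]
    _ ≤ (trunc (max n ((p ^ i).natDegree + 1)) ((p : R⟦X⟧) ^ i)).eval t :=
        eval_trunc_mono hp ht (le_max_left _ _)
    _ = p.eval t ^ i := by
        rw [← Polynomial.coe_pow, trunc_coe_eq_self (by omega), Polynomial.eval_pow]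

end NonnegCoeffs

theorem eval_trunc_le_div_mul_eval_trunc {K : Type*} [Field K] [LinearOrder K]
    [IsStrictOrderedRing K] {f : K⟦X⟧} (hf : f ∈ nonnegCoeffs K) (hf0 : constantCoeff f = 0)
    {x ρ : K} (hx : 0 ≤ x) (hxρ : x ≤ ρ) (n : ℕ) :
    (trunc n f).eval x ≤ x / ρ * (trunc n f).eval ρ := by
  rw [eval_trunc_eq_sum, eval_trunc_eq_sum, mul_sum]
  refine sum_le_sum fun i _ => ?_
  rcases i with _ | i
  · simp [hf0]
  · rcases hx.eq_or_lt with rfl | hx0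
    · simp
    have hρ : 0 < ρ := hx0.trans_le hxρ
    calc coeff (i + 1) f * x ^ (i + 1) = x * (coeff (i + 1) f * x ^ i) := by ring
      _ ≤ x * (coeff (i + 1) f * ρ ^ i) := by gcongr; exact hf _
      _ = x / ρ * (coeff (i + 1) f * ρ ^ (i + 1)) := by field_simp; ring

theorem summable_of_eval_trunc_le {f : ℝ⟦X⟧} (hf : f ∈ nonnegCoeffs ℝ) {t C : ℝ} (ht : 0 ≤ t)
    (h : ∀ n, (trunc n f).eval t ≤ C) : Summable fun n => |coeff n f| * t ^ n :=
  summable_of_sum_range_le (fun n => by positivity) fun n => by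
    simpa only [abs_of_nonneg (hf _), eval_trunc_eq_sum] using h n

section PsComp

variable {f g : ℝ⟦X⟧} {t : ℝ}

theorem coeff_psComp (f g : ℝ⟦X⟧) (n : ℕ) :
    coeff n (psComp f g) = ∑ i ∈ range (n + 1), coeff i f * coeff n (g ^ i) :=
  coeff_mk _ _

theorem psComp_mem_nonnegCoeffs (hf : f ∈ nonnegCoeffs ℝ) (hg : g ∈ nonnegCoeffs ℝ) :
    psComp f g ∈ nonnegCoeffs ℝ := fun n => by
  rw [coeff_psComp]
  exact sum_nonneg fun i _ => mul_nonneg (hf i) (pow_mem hg i n)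

theorem trunc_psComp_congr (f : ℝ⟦X⟧) {n : ℕ} {g g' : ℝ⟦X⟧} (h : trunc n g = trunc n g') :
    trunc n (psComp f g) = trunc n (psComp f g') :=
  trunc_eq_of_forall_coeff_eq fun m hm => by
    have hpow (i : ℕ) : trunc n (g ^ i) = trunc n (g' ^ i) := by
      rw [← trunc_trunc_pow, h, trunc_trunc_pow]
    simp only [coeff_psComp, coeff_eq_of_trunc_eq (hpow _) hm]

theorem eval_trunc_psComp_le (hf : f ∈ nonnegCoeffs ℝ) (hg : g ∈ nonnegCoeffs ℝ) (ht : 0 ≤ t)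
    (n : ℕ) : (trunc n (psComp f g)).eval t ≤ (trunc n f).eval ((trunc n g).eval t) := by
  have hterm (i m : ℕ) : 0 ≤ coeff i f * coeff m (g ^ i) * t ^ m :=
    mul_nonneg (mul_nonneg (hf i) (pow_mem hg i m)) (pow_nonneg ht m)
  calc (trunc n (psComp f g)).eval t
      = ∑ m ∈ range n, ∑ i ∈ range (m + 1), coeff i f * coeff m (g ^ i) * t ^ m := by
        simp only [eval_trunc_eq_sum, coeff_psComp, sum_mul]
    _ ≤ ∑ m ∈ range n, ∑ i ∈ range n, coeff i f * coeff m (g ^ i) * t ^ m :=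
        sum_le_sum fun m hm => sum_le_sum_of_subset_of_nonneg
          (range_subset_range.mpr (mem_range.mp hm)) fun i _ _ => hterm i m
    _ = ∑ i ∈ range n, coeff i f * (trunc n (g ^ i)).eval t := by
        simp only [eval_trunc_eq_sum, mul_sum, mul_assoc]
        exact sum_comm
    _ ≤ ∑ i ∈ range n, coeff i f * (trunc n g).eval t ^ i :=
        sum_le_sum fun i _ => mul_le_mul_of_nonneg_left (eval_trunc_pow_le hg ht n i) (hf i)
    _ = (trunc n f).eval ((trunc n g).eval t) := (eval_trunc_eq_sum _ _ _).symm

theorem exp_mem_nonnegCoeffs : exp ℝ ∈ nonnegCoeffs ℝ := fun n => by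
  rw [coeff_exp]
  positivity

theorem eval_trunc_exp_le {x : ℝ} (hx : 0 ≤ x) (n : ℕ) :
    (trunc n (exp ℝ)).eval x ≤ Real.exp x :=
  calc (trunc n (exp ℝ)).eval x = ∑ i ∈ range n, x ^ i / i.factorial := by
        simp only [eval_trunc_eq_sum, coeff_exp]
        refine sum_congr rfl fun i _ => ?_
        simp [div_eq_inv_mul]
    _ ≤ Real.exp x := Real.sum_le_exp_of_nonneg hx n

theorem eval_trunc_psComp_exp_le (hg : g ∈ nonnegCoeffs ℝ) (ht : 0 ≤ t) (n : ℕ) :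
    (trunc n (psComp (exp ℝ) g)).eval t ≤ Real.exp ((trunc n g).eval t) :=
  (eval_trunc_psComp_le exp_mem_nonnegCoeffs hg ht n).trans
    (eval_trunc_exp_le (eval_trunc_nonneg hg ht n) n)

end PsComp

noncomputable def compXExp (M : ℝ) (α γ : ℝ⟦X⟧) : ℝ⟦X⟧ :=
  psComp α (X * psComp (exp ℝ) (M • γ))

theorem isXAdicContraction_compXExp (M : ℝ) (α : ℝ⟦X⟧) : IsXAdicContraction (compXExp M α) :=
  fun n γ γ' h => trunc_psComp_congr α <| by
    have hMγ : trunc n (M • γ) = trunc n (M • γ') := by rw [map_smul, map_smul, h]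
    rw [trunc_succ_X_mul, trunc_succ_X_mul, trunc_psComp_congr _ hMγ]

theorem mapsTo_compXExp {M : ℝ} (hM : 0 ≤ M) {α : ℝ⟦X⟧} (hα : α ∈ nonnegCoeffs ℝ) :
    MapsTo (compXExp M α) (nonnegCoeffs ℝ) (nonnegCoeffs ℝ) := fun _ hγ =>
  psComp_mem_nonnegCoeffs hα <| mul_mem X_mem_nonnegCoeffs <|
    psComp_mem_nonnegCoeffs exp_mem_nonnegCoeffs (smul_mem_nonnegCoeffs hM hγ)

theorem constantCoeff_compXExp (M : ℝ) {α : ℝ⟦X⟧} (hα : constantCoeff α = 0) (γ : ℝ⟦X⟧) :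
    constantCoeff (compXExp M α γ) = 0 := by
  rw [← coeff_zero_eq_constantCoeff_apply, compXExp, coeff_psComp, sum_range_one,
    coeff_zero_eq_constantCoeff_apply, hα, zero_mul]

theorem eval_trunc_succ_X_mul_psComp_exp_le {M : ℝ} (hM : 0 ≤ M) {γ : ℝ⟦X⟧}
    (hγ : γ ∈ nonnegCoeffs ℝ) {t : ℝ} (ht : 0 ≤ t) {n : ℕ} (hγt : (trunc n γ).eval t ≤ 1) :
    (trunc (n + 1) (X * psComp (exp ℝ) (M • γ))).eval t ≤ t * Real.exp M :=
  calc (trunc (n + 1) (X * psComp (exp ℝ) (M • γ))).eval t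
      = t * (trunc n (psComp (exp ℝ) (M • γ))).eval t := by
        rw [trunc_succ_X_mul, Polynomial.eval_mul, Polynomial.eval_X]
    _ ≤ t * Real.exp ((trunc n (M • γ)).eval t) := by
        gcongr
        exact eval_trunc_psComp_exp_le (smul_mem_nonnegCoeffs hM hγ) ht n
    _ = t * Real.exp (M * (trunc n γ).eval t) := by
        rw [map_smul, Polynomial.eval_smul, smul_eq_mul]
    _ ≤ t * Real.exp M := by
        gcongr
        exact mul_le_of_le_one_right hM hγt

theorem exists_summable_of_isFixedPt_compXExp {M : ℝ} (hM : 0 ≤ M) {α : ℝ⟦X⟧}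
    (hα : α ∈ nonnegCoeffs ℝ) (hα0 : constantCoeff α = 0) {ρ : ℝ} (hρ : 0 < ρ)
    (hαρ : Summable fun n => coeff n α * ρ ^ n) {γ : ℝ⟦X⟧} (hγ : γ ∈ nonnegCoeffs ℝ)
    (hfix : IsFixedPt (compXExp M α) γ) :
    ∃ t > 0, Summable fun n => |coeff n γ| * t ^ n := by
  set S := ∑' n, coeff n α * ρ ^ n
  have hαS (n : ℕ) : (trunc n α).eval ρ ≤ S := by
    rw [eval_trunc_eq_sum]
    exact hαρ.sum_le_tsum _ fun i _ => mul_nonneg (hα i) (pow_nonneg hρ.le i)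
  have hS : 0 ≤ S := tsum_nonneg fun n => mul_nonneg (hα n) (pow_nonneg hρ.le n)
  set r := ρ / (1 + S)
  have hrρ : r ≤ ρ := div_le_self hρ.le (by linarith)
  have hrS : r / ρ * S ≤ 1 := by
    rw [div_div_cancel_left' hρ.ne', inv_mul_eq_div, div_le_one (by positivity)]
    linarith
  set t := r / Real.exp M
  have ht : 0 < t := by positivity
  have hE : X * psComp (exp ℝ) (M • γ) ∈ nonnegCoeffs ℝ :=
    mul_mem X_mem_nonnegCoeffs (psComp_mem_nonnegCoeffs exp_mem_nonnegCoeffs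
      (smul_mem_nonnegCoeffs hM hγ))
  have hbound (n : ℕ) : (trunc n γ).eval t ≤ 1 := by
    induction n with
    | zero => simp
    | succ n ih =>
      set x := (trunc (n + 1) (X * psComp (exp ℝ) (M • γ))).eval t
      have hx : 0 ≤ x := eval_trunc_nonneg hE ht.le _
      have hxr : x ≤ r := (eval_trunc_succ_X_mul_psComp_exp_le hM hγ ht.le ih).trans_eq
        (div_mul_cancel₀ r (Real.exp_pos M).ne')
      calc (trunc (n + 1) γ).eval t = (trunc (n + 1) (compXExp M α γ)).eval t := by rw [hfix]
        _ ≤ (trunc (n + 1) α).eval x := eval_trunc_psComp_le hα hE ht.le _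
        _ ≤ x / ρ * (trunc (n + 1) α).eval ρ :=
          eval_trunc_le_div_mul_eval_trunc hα hα0 hx (hxr.trans hrρ) _
        _ ≤ r / ρ * S :=
          mul_le_mul (by gcongr) (hαS _) (eval_trunc_nonneg hα hρ.le _) (by positivity)
        _ ≤ 1 := hrS
  exact ⟨t, ht, summable_of_eval_trunc_le hγ ht.le hbound⟩

/-- The key analytic step in Proposition 9.2: for `M > 0` and a formal series `α`
with zero constant term, nonnegative coefficients and positive radius of
convergence, the functional equation `γ = α(r·e^{M γ(r)})` has a unique solution
`γ` with zero constant term, and that solution again has nonnegative coefficients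
and positive radius of convergence.  Here `e^{M γ}` is the substitution of `M • γ`
into the exponential power series `∑ Xⁿ/n!`. -/
theorem fixed_point_analytic (M : ℝ) (hM : 0 < M) (α : PowerSeries ℝ)
    (hα0 : PowerSeries.constantCoeff α = 0)
    (hαpos : ∀ n : ℕ, 0 ≤ PowerSeries.coeff n α)
    (hαconv : ∃ ρ > (0 : ℝ), Summable fun n : ℕ => |PowerSeries.coeff n α| * ρ ^ n) :
    (∃! γ : PowerSeries ℝ, PowerSeries.constantCoeff γ = 0 ∧
        γ = psComp α (PowerSeries.X * psComp (PowerSeries.exp ℝ) (M • γ))) ∧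
    (∀ γ : PowerSeries ℝ, PowerSeries.constantCoeff γ = 0 →
        γ = psComp α (PowerSeries.X * psComp (PowerSeries.exp ℝ) (M • γ)) →
        (∀ n : ℕ, 0 ≤ PowerSeries.coeff n γ) ∧
          ∃ ρ > (0 : ℝ), Summable fun n : ℕ => |PowerSeries.coeff n γ| * ρ ^ n) := by
  have hΦ := isXAdicContraction_compXExp M α
  obtain ⟨γ, hγ, huniq⟩ := hΦ.existsUnique_isFixedPt
  refine ⟨⟨γ, ⟨?_, hγ.symm⟩, fun γ' hγ' => huniq γ' hγ'.2.symm⟩, fun γ' _ hfix => ?_⟩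
  · rw [← hγ]
    exact constantCoeff_compXExp M hα0 γ
  have hnonneg := hΦ.mem_nonnegCoeffs_of_isFixedPt (mapsTo_compXExp hM.le hαpos) hfix.symm
  obtain ⟨ρ, hρ, hαρ⟩ := hαconv
  refine ⟨hnonneg, exists_summable_of_isFixedPt_compXExp hM.le hαpos hα0 hρ ?_ hnonneg hfix.symm⟩
  simpa only [abs_of_nonneg (hαpos _)] using hαρ
end

section
/- Let k be a field of characteristic 0, n ≥ 1, and f_n = FreeLieAlgebra k (Fin n) with generators x_1, …, x_n. Let u_1, …, u_n, v_1, …, v_n ∈ f_n and let D, D′ be Lie algebra derivations of f_n with D(x_k) = ⁅u_k, x_k⁆ and D′(x_k) = ⁅v_k, x_k⁆ for all k. Then the commutator derivation ⁅D, D′⁆ = D∘D′ − D′∘D satisfies ⁅D, D′⁆(x_k) = ⁅w_k, x_k⁆ for all k, where w_k := D(v_k) − D′(u_k) + ⁅v_k, u_k⁆. In particular, the set of tangential derivations of f_n is a Lie subalgebra of the derivations of f_n. -/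
open FreeLieAlgebra

lemma tangential_key (k : Type) [Field k] [CharZero k] {L : Type} [LieRing L]
    [LieAlgebra k L] (D D' : LieDerivation k L L) (u v x : L)
    (hD : D x = ⁅u, x⁆) (hD' : D' x = ⁅v, x⁆) :
    ⁅D, D'⁆ x = ⁅D v - D' u + ⁅v, u⁆, x⁆ := by
  rw [LieDerivation.commutator_apply, hD', hD, D.apply_lie_eq_add,
    D'.apply_lie_eq_add, hD, hD']
  simp only [sub_lie, add_lie, lie_lie]
  abel

/-- Tangential derivations of the free Lie algebra are closed under the commutator
bracket: if `D, D'` are derivations with `D x_κ = ⁅u_κ, x_κ⁆` and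
`D' x_κ = ⁅v_κ, x_κ⁆`, then `⁅D, D'⁆ x_κ = ⁅w_κ, x_κ⁆` with
`w_κ = D v_κ - D' u_κ + ⁅v_κ, u_κ⁆`.  In particular the set of tangential
derivations is a Lie subalgebra of the derivations of `f_n`. -/
theorem tangential_closed_under_bracket (k : Type) [Field k] [CharZero k]
    (n : ℕ) (hn : 1 ≤ n)
    (u v : Fin n → FreeLieAlgebra k (Fin n))
    (D D' : LieDerivation k (FreeLieAlgebra k (Fin n)) (FreeLieAlgebra k (Fin n)))
    (hD : ∀ κ : Fin n, D (of k κ) = ⁅u κ, of k κ⁆)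
    (hD' : ∀ κ : Fin n, D' (of k κ) = ⁅v κ, of k κ⁆) :
    (∀ κ : Fin n, ⁅D, D'⁆ (of k κ) = ⁅D (v κ) - D' (u κ) + ⁅v κ, u κ⁆, of k κ⁆) ∧
    ∃ S : LieSubalgebra k
        (LieDerivation k (FreeLieAlgebra k (Fin n)) (FreeLieAlgebra k (Fin n))),
      (S : Set (LieDerivation k (FreeLieAlgebra k (Fin n))
          (FreeLieAlgebra k (Fin n)))) =
        {E | ∃ w : Fin n → FreeLieAlgebra k (Fin n),
          ∀ κ : Fin n, E (of k κ) = ⁅w κ, of k κ⁆} := by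
  refine ⟨fun κ => tangential_key k D D' (u κ) (v κ) (of k κ) (hD κ) (hD' κ), ?_⟩
  set T : Set (LieDerivation k (FreeLieAlgebra k (Fin n)) (FreeLieAlgebra k (Fin n))) :=
    {E | ∃ w : Fin n → FreeLieAlgebra k (Fin n),
      ∀ κ : Fin n, E (of k κ) = ⁅w κ, of k κ⁆} with hT
  refine ⟨⟨{ carrier := T,
             add_mem' := ?_,
             zero_mem' := ⟨0, by simp⟩,
             smul_mem' := ?_ }, ?_⟩, rfl⟩
  · rintro E E' ⟨w, hw⟩ ⟨w', hw'⟩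
    exact ⟨w + w', fun κ => by simp [hw κ, hw' κ, add_lie]⟩
  · rintro c E ⟨w, hw⟩
    exact ⟨c • w, fun κ => by simp [hw κ, smul_lie]⟩
  · rintro E E' ⟨w, hw⟩ ⟨w', hw'⟩
    exact ⟨fun κ => E (w' κ) - E' (w κ) + ⁅w' κ, w κ⁆,
      fun κ => tangential_key k E E' (w κ) (w' κ) (of k κ) (hw κ) (hw' κ)⟩
end

section
/- Let k be a field of characteristic 0, n ≥ 1, and let L = FreeLieAlgebra k (Fin n) be the free Lie algebra on generators x_1, …, x_n. If u ∈ L satisfies ⁅u, x_κ⁆ = 0 for some index κ, then u is a scalar multiple of x_κ, i.e. there exists c ∈ k with u = c • x_κ. (Hence the centralizer of each generator x_κ in L is the line k·x_κ; this is the fact underlying the uniqueness of the presentation of a tangential derivation u = ⟦u_1,…,u_n⟧ with normalized components.) -/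
/-!
Let `A = k[FreeMonoid X]` be the free associative algebra, `φ : L → A` the Lie map extending
`x_i ↦ x_i`, and `θ : A → L` the Dynkin map sending a word `x_{i₁} ⋯ x_{iₘ}` to the
right-normed bracket `⁅x_{i₁}, ⁅…, x_{iₘ}⁆⁆`. Then `θ (a * b) = ρ a (θ b) + ε b • θ a`, where
`ρ : A → End L` extends `ad` and `ε` is the augmentation, so `θ ∘ φ` is a derivation of `L`
fixing every generator: it multiplies a bracket of `m` generators by `m`, hence is injective
in characteristic zero. If `⁅u, x_κ⁆ = 0`, then `φ u` commutes with the letter `x_κ`, which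
forces `φ u` to be a polynomial in `x_κ`; since `θ` kills `x_κ ^ m` for `m ≠ 1`, we get
`θ (φ u) = c • x_κ = θ (φ (c • x_κ))`.
-/

attribute [local instance] LieRing.ofAssociativeRing

namespace FreeMonoid

variable {α : Type*}

theorem eq_pow_or_eq_pow_mul_of_mul (a : α) (w : FreeMonoid α) :
    (∃ m : ℕ, w = of a ^ m) ∨
      ∃ (p : ℕ) (i : α) (t : FreeMonoid α), i ≠ a ∧ w = of a ^ p * (of i * t) := by
  induction w using FreeMonoid.inductionOn' with
  | one => exact .inl ⟨0, rfl⟩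
  | of_mul i w ih =>
    by_cases hi : i = a
    · subst hi
      refine ih.imp (fun ⟨m, hm⟩ => ⟨m + 1, by rw [hm, pow_succ']⟩) ?_
      rintro ⟨p, j, t, hj, rfl⟩
      exact ⟨p + 1, j, t, hj, by rw [pow_succ', mul_assoc]⟩
    · exact .inr ⟨0, i, w, hi, by rw [pow_zero, one_mul]⟩

theorem toList_of_pow (a : α) (m : ℕ) : (of a ^ m).toList = List.replicate m a := by
  induction m with
  | zero => rfl
  | succ m ih => rw [pow_succ', toList_of_mul, ih, List.replicate_succ]

end FreeMonoid

namespace MonoidAlgebra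

variable {R α : Type*} [Semiring R] {a : α} {f : MonoidAlgebra R (FreeMonoid α)}

theorem coeff_of_mul_eq_zero_of_commute (h : Commute (single (FreeMonoid.of a) 1) f) {i : α}
    (hi : i ≠ a) (t : FreeMonoid α) : f.coeff (FreeMonoid.of i * t) = 0 := by
  calc f.coeff (FreeMonoid.of i * t)
      = (f * single (FreeMonoid.of a) 1).coeff (FreeMonoid.of i * t * FreeMonoid.of a) := by
        rw [coeff_mul_single_mul, mul_one]
    _ = (single (FreeMonoid.of a) 1 * f).coeff (FreeMonoid.of i * t * FreeMonoid.of a) := by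
        rw [h.eq]
    _ = 0 := coeff_single_mul_of_forall_mul_ne _ _ fun d hd => hi <| by
        simpa using congrArg List.head? (congrArg FreeMonoid.toList hd).symm

theorem coeff_of_mul_eq_coeff_mul_of_of_commute (h : Commute (single (FreeMonoid.of a) 1) f)
    (w : FreeMonoid α) : f.coeff (FreeMonoid.of a * w) = f.coeff (w * FreeMonoid.of a) := by
  calc f.coeff (FreeMonoid.of a * w)
      = (f * single (FreeMonoid.of a) 1).coeff (FreeMonoid.of a * w * FreeMonoid.of a) := by
        rw [coeff_mul_single_mul, mul_one]
    _ = (single (FreeMonoid.of a) 1 * f).coeff (FreeMonoid.of a * (w * FreeMonoid.of a)) := by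
        rw [h.eq, mul_assoc]
    _ = f.coeff (w * FreeMonoid.of a) := by
        rw [coeff_single_mul_mul, one_mul]

theorem coeff_eq_zero_of_commute (h : Commute (single (FreeMonoid.of a) 1) f)
    {w : FreeMonoid α} (hw : ∀ m : ℕ, w ≠ FreeMonoid.of a ^ m) : f.coeff w = 0 := by
  obtain ⟨p, i, t, hi, rfl⟩ :=
    (FreeMonoid.eq_pow_or_eq_pow_mul_of_mul a w).resolve_left (not_exists.mpr hw)
  clear hw
  -- rotate the leading letters `a` to the back until the letter `i ≠ a` comes first
  induction p generalizing t with
  | zero => rw [pow_zero, one_mul]; exact coeff_of_mul_eq_zero_of_commute h hi t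
  | succ p ih =>
    rw [pow_succ', mul_assoc, coeff_of_mul_eq_coeff_mul_of_of_commute h, mul_assoc, mul_assoc,
      ih (t * FreeMonoid.of a)]

end MonoidAlgebra

noncomputable section

open MonoidAlgebra

namespace FreeLieAlgebra

variable (k : Type*) {X : Type*} [CommRing k]

theorem lieSpan_range_of_s8 :
    LieSubalgebra.lieSpan k _ (Set.range (of k : X → FreeLieAlgebra k X)) = ⊤ := by
  set S := LieSubalgebra.lieSpan k _ (Set.range (of k : X → FreeLieAlgebra k X))
  let g : FreeLieAlgebra k X →ₗ⁅k⁆ S :=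
    lift k fun i => ⟨of k i, LieSubalgebra.subset_lieSpan ⟨i, rfl⟩⟩
  have hg : S.incl.comp g = LieHom.id := hom_ext (R := k) fun i => by simp [g]
  refine eq_top_iff.mpr fun u _ => ?_
  rw [← show S.incl (g u) = u from LieHom.congr_fun hg u]
  exact (g u).2

def lieMonomial : FreeMagma X → FreeLieAlgebra k X
  | .of i => of k i
  | a * b => ⁅lieMonomial a, lieMonomial b⁆

theorem span_range_lieMonomial :
    Submodule.span k (Set.range (lieMonomial k (X := X))) = ⊤ := by
  let S : LieSubalgebra k (FreeLieAlgebra k X) :=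
    { Submodule.span k (Set.range (lieMonomial k)) with
      lie_mem' := fun {x y} hx hy => by
        have h := Submodule.apply_mem_map₂ (LieAlgebra.ad k _).toLinearMap hx hy
        rw [Submodule.map₂_span_span] at h
        refine Submodule.span_mono ?_ h
        rintro _ ⟨_, ⟨a, rfl⟩, _, ⟨b, rfl⟩, rfl⟩
        exact ⟨a * b, rfl⟩ }
  have hS : LieSubalgebra.lieSpan k _ (Set.range (of k)) ≤ S :=
    LieSubalgebra.lieSpan_le.mpr <| by
      rintro _ ⟨i, rfl⟩
      exact Submodule.subset_span ⟨.of i, rfl⟩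
  rw [lieSpan_range_of_s8] at hS
  exact eq_top_iff.mpr fun u _ => hS (LieSubalgebra.mem_top u)

def toFreeMonoidAlgebra : FreeLieAlgebra k X →ₗ⁅k⁆ MonoidAlgebra k (FreeMonoid X) :=
  lift k fun i => MonoidAlgebra.of k _ (FreeMonoid.of i)

theorem toFreeMonoidAlgebra_of (i : X) :
    toFreeMonoidAlgebra k (of k i) = single (FreeMonoid.of i) 1 :=
  lift_of_apply _ _

def adAlgHom : MonoidAlgebra k (FreeMonoid X) →ₐ[k] Module.End k (FreeLieAlgebra k X) :=
  MonoidAlgebra.lift k _ _ (FreeMonoid.lift fun i => LieAlgebra.ad k _ (of k i))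

theorem adAlgHom_toFreeMonoidAlgebra (u v : FreeLieAlgebra k X) :
    adAlgHom k (toFreeMonoidAlgebra k u) v = ⁅u, v⁆ := by
  have : (adAlgHom k).toLieHom.comp (toFreeMonoidAlgebra k (X := X)) = LieAlgebra.ad k _ :=
    hom_ext fun i => by simp [adAlgHom, toFreeMonoidAlgebra_of]
  exact LinearMap.congr_fun (LieHom.congr_fun this u) v

def augmentation : MonoidAlgebra k (FreeMonoid X) →ₐ[k] k :=
  MonoidAlgebra.lift k k _ (FreeMonoid.lift fun _ => 0)

theorem augmentation_single_one (c : k) : augmentation k (single (1 : FreeMonoid X) c) = c := by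
  simp [augmentation]

theorem augmentation_single_of_ne_one {w : FreeMonoid X} (hw : w ≠ 1) (c : k) :
    augmentation k (single w c) = 0 := by
  cases w using FreeMonoid.casesOn with
  | one => exact absurd rfl hw
  | of_mul i w => simp [augmentation]

theorem augmentation_toFreeMonoidAlgebra (u : FreeLieAlgebra k X) :
    augmentation k (toFreeMonoidAlgebra k u) = 0 := by
  have : (augmentation k).toLieHom.comp (toFreeMonoidAlgebra k (X := X)) = 0 :=
    hom_ext fun i => by simp [augmentation_single_of_ne_one, toFreeMonoidAlgebra_of]
  exact LieHom.congr_fun this u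

def dynkinBracket : List X → FreeLieAlgebra k X
  | [] => 0
  | [i] => of k i
  | i :: j :: l => ⁅of k i, dynkinBracket (j :: l)⁆

theorem dynkinBracket_cons (i : X) {l : List X} (hl : l ≠ []) :
    dynkinBracket k (i :: l) = ⁅of k i, dynkinBracket k l⁆ := by
  cases l with
  | nil => exact absurd rfl hl
  | cons j l => rfl

theorem dynkinBracket_mul (w : FreeMonoid X) {w' : FreeMonoid X} (hw' : w' ≠ 1) :
    dynkinBracket k (w * w').toList =
      adAlgHom k (single w 1) (dynkinBracket k w'.toList) := by
  induction w using FreeMonoid.inductionOn' with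
  | one => rw [one_mul, ← one_def, map_one, Module.End.one_apply]
  | of_mul i w ih =>
    have hww' : (w * w').toList ≠ [] := by
      rw [FreeMonoid.toList_mul]
      exact fun h => hw' (FreeMonoid.toList.injective (List.append_eq_nil_iff.mp h).2)
    rw [mul_assoc, FreeMonoid.toList_of_mul, dynkinBracket_cons k i hww', ih,
      ← mul_one (1 : k), ← single_mul_single, map_mul]
    simp [adAlgHom]

theorem dynkinBracket_replicate (i : X) {m : ℕ} (hm : m ≠ 1) :
    dynkinBracket k (List.replicate m i) = 0 := by
  obtain _ | _ | m := m
  · rfl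
  · exact absurd rfl hm
  clear hm
  induction m with
  | zero => exact lie_self _
  | succ m ih => rw [List.replicate_succ, dynkinBracket_cons k i (by simp), ih, lie_zero]

def dynkin : MonoidAlgebra k (FreeMonoid X) →ₗ[k] FreeLieAlgebra k X :=
  Finsupp.linearCombination k (fun w : FreeMonoid X => dynkinBracket k w.toList) ∘ₗ
    (coeffLinearEquiv k).toLinearMap

theorem dynkin_apply (a : MonoidAlgebra k (FreeMonoid X)) :
    dynkin k a = a.coeff.sum fun w c => c • dynkinBracket k w.toList :=
  Finsupp.linearCombination_apply _ _

theorem dynkin_single (w : FreeMonoid X) (c : k) :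
    dynkin k (single w c) = c • dynkinBracket k w.toList :=
  Finsupp.linearCombination_single _ _ _

theorem dynkin_mul (a b : MonoidAlgebra k (FreeMonoid X)) :
    dynkin k (a * b) = adAlgHom k a (dynkin k b) + augmentation k b • dynkin k a := by
  induction a using MonoidAlgebra.induction_on with
  | of w =>
    induction b using MonoidAlgebra.induction_on with
    | of w' =>
      simp only [MonoidAlgebra.of_apply, single_mul_single, mul_one, dynkin_single, one_smul]
      by_cases hw' : w' = 1
      · subst hw'
        simp [augmentation_single_one, dynkinBracket]
      · rw [dynkinBracket_mul k w hw', augmentation_single_of_ne_one k hw', zero_smul, add_zero]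
    | add b b' hb hb' =>
      simp only [mul_add, map_add, hb, hb', add_smul]
      abel
    | smul c b hb =>
      rw [mul_smul_comm, map_smul, hb, map_smul, map_smul, map_smul, smul_eq_mul, mul_smul,
        smul_add]
  | add a a' ha ha' =>
    simp only [add_mul, map_add, ha, ha', LinearMap.add_apply, smul_add]
    abel
  | smul c a ha =>
    rw [smul_mul_assoc, map_smul, ha, map_smul, map_smul, LinearMap.smul_apply, smul_add,
      smul_comm c (augmentation k b)]

theorem dynkin_eq_of_commute {κ : X} {a : MonoidAlgebra k (FreeMonoid X)}
    (h : Commute (single (FreeMonoid.of κ) 1) a) :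
    dynkin k a = a.coeff (FreeMonoid.of κ) • of k κ := by
  rw [dynkin_apply, Finsupp.sum, Finset.sum_eq_single (FreeMonoid.of κ)]
  · rfl
  · intro w _ hw
    by_cases hpow : ∃ m : ℕ, w = FreeMonoid.of κ ^ m
    · obtain ⟨m, rfl⟩ := hpow
      have hm : m ≠ 1 := by rintro rfl; exact hw (pow_one _)
      rw [FreeMonoid.toList_of_pow, dynkinBracket_replicate k κ hm, smul_zero]
    · rw [coeff_eq_zero_of_commute h (not_exists.mp hpow), zero_smul]
  · intro hκ
    rw [Finsupp.notMem_support_iff.mp hκ, zero_smul]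

def euler : LieDerivation k (FreeLieAlgebra k X) (FreeLieAlgebra k X) where
  toLinearMap := dynkin k ∘ₗ (toFreeMonoidAlgebra k).toLinearMap
  leibniz' u v := by
    simp only [LinearMap.comp_apply, LieHom.coe_toLinearMap, LieHom.map_lie, Ring.lie_def,
      map_sub, dynkin_mul, augmentation_toFreeMonoidAlgebra, zero_smul, add_zero,
      adAlgHom_toFreeMonoidAlgebra]

theorem euler_apply (u : FreeLieAlgebra k X) :
    euler k u = dynkin k (toFreeMonoidAlgebra k u) :=
  rfl

theorem euler_of (i : X) : euler k (of k i) = of k i := by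
  rw [euler_apply, toFreeMonoidAlgebra_of, dynkin_single, one_smul]
  rfl

theorem euler_lieMonomial (w : FreeMagma X) :
    euler k (lieMonomial k w) = (w.length : k) • lieMonomial k w := by
  induction w with
  | ih1 i => simp [lieMonomial, euler_of]
  | ih2 a b iha ihb =>
    simp only [lieMonomial, FreeMagma.length]
    rw [LieDerivation.apply_lie_eq_add, iha, ihb, lie_smul, smul_lie, Nat.cast_add, add_smul,
      add_comm]

theorem euler_injective {k : Type*} [Field k] [CharZero k] :
    Function.Injective (euler k (X := X)) := by
  refine (injective_iff_map_eq_zero (euler k)).mpr fun u hu => ?_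
  have h_zero : u ∈ Module.End.eigenspace (euler k (X := X)).toLinearMap 0 := by
    rwa [Module.End.mem_eigenspace_iff, zero_smul]
  have h_pos : u ∈ ⨆ (μ : k) (_ : μ ≠ 0),
      Module.End.eigenspace (euler k (X := X)).toLinearMap μ := by
    refine Submodule.span_le.mpr ?_ (span_range_lieMonomial k ▸ Submodule.mem_top)
    rintro _ ⟨w, rfl⟩
    exact Submodule.mem_iSup_of_mem (w.length : k) <|
      Submodule.mem_iSup_of_mem (Nat.cast_ne_zero.mpr w.length_pos.ne') <|
        Module.End.mem_eigenspace_iff.mpr (euler_lieMonomial k w)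
  exact Submodule.disjoint_def.mp (Module.End.eigenspaces_iSupIndep _ 0) u h_zero h_pos

end FreeLieAlgebra

end

theorem centralizer_of_generator_general (k : Type) [Field k] [CharZero k]
    (n : ℕ) (κ : Fin n) (u : FreeLieAlgebra k (Fin n))
    (h : ⁅u, FreeLieAlgebra.of k κ⁆ = 0) :
    ∃ c : k, u = c • FreeLieAlgebra.of k κ := by
  set a := FreeLieAlgebra.toFreeMonoidAlgebra k u
  have h_comm : Commute (MonoidAlgebra.single (FreeMonoid.of κ) 1) a := by
    have := congrArg (FreeLieAlgebra.toFreeMonoidAlgebra k) h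
    rw [LieHom.map_lie, map_zero, FreeLieAlgebra.toFreeMonoidAlgebra_of, Ring.lie_def,
      sub_eq_zero] at this
    exact this.symm
  refine ⟨a.coeff (FreeMonoid.of κ), FreeLieAlgebra.euler_injective ?_⟩
  rw [FreeLieAlgebra.euler_apply, FreeLieAlgebra.dynkin_eq_of_commute k h_comm, map_smul,
    FreeLieAlgebra.euler_of]

/-- The centralizer of a generator `x_κ` in the free Lie algebra `f_n` is the line
`k · x_κ`: if `⁅u, x_κ⁆ = 0` then `u` is a scalar multiple of `x_κ` (the
uniqueness claim for the normalized presentation of tangential derivations,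
Section 1.1 of the paper). -/
theorem centralizer_of_generator (k : Type) [Field k] [CharZero k]
    (n : ℕ) (hn : 1 ≤ n) (κ : Fin n) (u : FreeLieAlgebra k (Fin n))
    (h : ⁅u, FreeLieAlgebra.of k κ⁆ = 0) :
    ∃ c : k, u = c • FreeLieAlgebra.of k κ :=
  centralizer_of_generator_general k n κ u h
end

section
/- Let n ≥ 1 and consider the braid group B_{n+1} (presented by the Artin relations on σ_1, …, σ_n) with the elements x_{1j} for 2 ≤ j ≤ n+1. Then: (i) the group homomorphism from the free group on n generators, FreeGroup (Fin n) → B_{n+1}, sending the i-th generator X_i to x_{1,i+2} (i.e. to x_{12}, x_{13}, …, x_{1,n+1}) is injective; and (ii) its range, the subgroup of B_{n+1} generated by {x_{12}, …, x_{1,n+1}}, is a normal subgroup of the pure braid group PB_{n+1} = ker(B_{n+1} → S_{n+1}). -/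
/-!
The braid group `B_m` on `m = N + 2 ≥ 2` strands, presented by the Artin
relations on the generators `σ_1, …, σ_{m-1}` (indexed by `Fin (N+1)`, the
generator `σ_l`, `1 ≤ l ≤ m - 1`, corresponding to the index `l - 1`).
-/

/-- The Artin relations: `σ_i σ_{i+1} σ_i (σ_{i+1} σ_i σ_{i+1})⁻¹` for adjacent
indices and `σ_i σ_j (σ_j σ_i)⁻¹` for `|i - j| > 1`. -/
def braidRels (N : ℕ) : Set (FreeGroup (Fin (N + 1))) :=
  { r |
    (∃ i j : Fin (N + 1), (i : ℕ) + 1 = (j : ℕ) ∧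
      r = FreeGroup.of i * FreeGroup.of j * FreeGroup.of i *
        (FreeGroup.of j * FreeGroup.of i * FreeGroup.of j)⁻¹) ∨
    (∃ i j : Fin (N + 1), (i : ℕ) + 1 < (j : ℕ) ∧
      r = FreeGroup.of i * FreeGroup.of j *
        (FreeGroup.of j * FreeGroup.of i)⁻¹) }

/-- The braid group on `N + 2` strands. -/
abbrev Braid (N : ℕ) := PresentedGroup (braidRels N)

/-- The Artin generator `σ_l` of `B_{N+2}`, for `1 ≤ l ≤ N + 1` (junk value `1`
otherwise). -/
def sig (N : ℕ) (l : ℕ) : Braid N :=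
  if h : 1 ≤ l ∧ l ≤ N + 1 then PresentedGroup.of ⟨l - 1, by omega⟩ else 1

/-- The word `σ_{j-2} σ_{j-3} ⋯ σ_i`. -/
def chain (N : ℕ) (i j : ℕ) : Braid N :=
  ((List.range (j - 1 - i)).map fun t => sig N (j - 2 - t)).prod

/-- The pure braid generator `x_{ij} = (σ_{j-2} ⋯ σ_i)⁻¹ σ_{j-1}² (σ_{j-2} ⋯ σ_i)`
for `1 ≤ i < j ≤ N + 2`. -/
def xgen (N : ℕ) (i j : ℕ) : Braid N :=
  (chain N i j)⁻¹ * (sig N (j - 1)) ^ 2 * chain N i j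

/-!
For `k ≥ 2`, conjugation by `σ_k` fixes `x_{1j}` for `j ≠ k, k+1`, sends `x_{1k}` to `x_{1,k+1}`
and `x_{1,k+1}` to `x_{1,k+1}⁻¹ x_{1k} x_{1,k+1}`, so `σ_k` normalises
`R = ⟨x_{12}, …, x_{1,N+2}⟩`. Hence the conjugates `R_q = (σ_q ⋯ σ_1) R (σ_q ⋯ σ_1)⁻¹` are
permuted by `σ_l` exactly as `q` is permuted by the transposition `(l, l+1)`, and a pure braid,
inducing the identity permutation, normalises `R_0 = R`.

For freeness, let the braid group act on the free group on `x_0, x_1, …` by Artin's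
representation. Each `x_{1,m+2}` sends `x_0` to a conjugate of `x_0` and is invisible to the map
`forgetZero` killing `x_0`; therefore a word `w` in the `x_{1j}` sends `x_0` to `h⁻¹ x_0 h` with
`forgetZero h = τ w`, where `τ = Artin.twist` is an involution. If `w` is the trivial braid, `h`
centralises `x_0`, so `forgetZero h = 1`, and `w = τ (τ w) = 1`.
-/

open Pointwise

section

variable {G : Type*} [Group G]

lemma SemiconjBy.conj_conj_inv {c s t : G} (h : SemiconjBy c s t) (y : G) :
    s * (c⁻¹ * y * c) * s⁻¹ = c⁻¹ * (t * y * t⁻¹) * c := by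
  obtain rfl : s = c⁻¹ * t * c := by rw [mul_assoc, ← h.eq]; group
  group

variable {a b : G}

lemma braid_conj_sq (h : a * b * a = b * a * b) : b * a ^ 2 * b⁻¹ = a⁻¹ * b ^ 2 * a := by
  have hba : b * a * b⁻¹ = a⁻¹ * b * a := by
    rw [mul_inv_eq_iff_eq_mul, mul_assoc, mul_assoc, ← mul_assoc b, ← h]; group
  calc b * a ^ 2 * b⁻¹ = (b * a * b⁻¹) * (b * a * b⁻¹) := by rw [pow_two]; group
    _ = a⁻¹ * b ^ 2 * a := by rw [hba, pow_two]; group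

lemma braid_conj_conj_sq (h : a * b * a = b * a * b) :
    b * (a⁻¹ * b ^ 2 * a) * b⁻¹ = (a⁻¹ * b ^ 2 * a)⁻¹ * a ^ 2 * (a⁻¹ * b ^ 2 * a) := by
  have hba : b * a * b⁻¹ = a⁻¹ * b * a := by
    rw [mul_inv_eq_iff_eq_mul, mul_assoc, mul_assoc, ← mul_assoc b, ← h]; group
  have hbab : b * a * b * b = a * a * b * a := by
    calc b * a * b * b = a * b * a * b := by rw [h]
      _ = a * (b * a * b) := by group
      _ = a * a * b * a := by rw [← h]; group
  simp only [pow_two]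
  calc b * (a⁻¹ * (b * b) * a) * b⁻¹ = (b * a * b⁻¹)⁻¹ * (b * b) * (b * a * b⁻¹) := by group
    _ = a⁻¹ * b⁻¹ * b⁻¹ * (b * a * b * b) * a⁻¹ * b * a := by rw [hba]; group
    _ = (a⁻¹ * (b * b) * a)⁻¹ * (a * a) * (a⁻¹ * (b * b) * a) := by rw [hbab]; group

end

lemma conj_smul_conj_smul {G : Type*} [Group G] (a b : G) (H : Subgroup G) :
    MulAut.conj a • MulAut.conj b • H = MulAut.conj (a * b) • H := by
  rw [smul_smul, map_mul]

lemma conj_smul_range_lift_le {G ι : Type*} [Group G] {f : ι → G} {H : Subgroup G} (g : G)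
    (h : ∀ i, g * f i * g⁻¹ ∈ H) : MulAut.conj g • (FreeGroup.lift f).range ≤ H := by
  rw [FreeGroup.range_lift_eq_closure, Subgroup.smul_closure, Subgroup.closure_le]
  rintro _ ⟨_, ⟨i, rfl⟩, rfl⟩
  exact h i

namespace FreeGroup

variable {α G : Type*} [Group G]

lemma mulAut_ext {e e' : MulAut (FreeGroup α)} (h : ∀ a, e (of a) = e' (of a)) : e = e' :=
  MulEquiv.toMonoidHom_injective (ext_hom _ _ h)

open Classical in
noncomputable def heightAction (f : α → G) (a : α) : FreeGroup α →* Equiv.Perm (G × ℤ) :=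
  lift fun b => if b = a then
    { toFun := fun p => (p.1, p.2 + if p.1 = 1 then 1 else 0)
      invFun := fun p => (p.1, p.2 - if p.1 = 1 then 1 else 0)
      left_inv := fun p => by simp
      right_inv := fun p => by simp }
    else (Equiv.mulLeft (f b)).prodCongr (Equiv.refl ℤ)

lemma exists_heightAction_apply (f : α → G) (a : α) (hf : f a = 1) (w : FreeGroup α) :
    ∃ δ : G → ℤ, ∀ x n, heightAction f a w (x, n) = (lift f w * x, n + δ x) := by
  classical
  induction w using FreeGroup.induction_on with
  | C1 => exact ⟨0, fun x n => by simp⟩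
  | of b =>
    by_cases hb : b = a
    · subst hb
      exact ⟨fun x => if x = 1 then 1 else 0, fun x n => by simp [heightAction, hf]⟩
    · exact ⟨0, fun x n => by simp [heightAction, hb]⟩
  | inv_of b =>
    by_cases hb : b = a
    · subst hb
      refine ⟨fun x => -if x = 1 then 1 else 0, fun x n => ?_⟩
      simp [heightAction, hf, Equiv.Perm.inv_def, sub_eq_add_neg]
    · refine ⟨0, fun x n => ?_⟩
      simp [heightAction, hb, Equiv.Perm.inv_def]
  | mul u v hu hv =>
    obtain ⟨δu, hδu⟩ := hu
    obtain ⟨δv, hδv⟩ := hv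
    exact ⟨fun x => δv x + δu (lift f v * x), fun x n => by
      rw [_root_.map_mul, Equiv.Perm.mul_apply, hδv, hδu, _root_.map_mul, mul_assoc, add_assoc]⟩

/-- In `heightAction`, `of a` moves only the points over `1`; so if `g` commutes with `of a`,
then `lift f g` must fix `1`. -/
theorem lift_eq_one_of_commute_of (f : α → G) (a : α) (hf : f a = 1) {g : FreeGroup α}
    (hg : Commute g (of a)) : lift f g = 1 := by
  classical
  obtain ⟨δ, hδ⟩ := exists_heightAction_apply f a hf g
  have hraise : ∀ x n, heightAction f a (of a) (x, n) = (x, n + if x = 1 then 1 else 0) := by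
    intro x n; simp [heightAction]
  have h := congrArg (fun σ => (σ (1, 0)).2) (congrArg (heightAction f a) hg.eq)
  simp only [_root_.map_mul, Equiv.Perm.mul_apply, hraise, hδ] at h
  by_contra hne
  simp [hne] at h

end FreeGroup

namespace Artin

open FreeGroup (of lift ext_hom)

def gen (i : ℕ) : MulAut (FreeGroup ℕ) :=
  MonoidHom.toMulEquiv
    (lift fun k => if k = i then of i * of (i + 1) * (of i)⁻¹ else if k = i + 1 then of i else of k)
    (lift fun k => if k = i then of (i + 1) else
      if k = i + 1 then (of (i + 1))⁻¹ * of i * of (i + 1) else of k)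
    (ext_hom _ _ fun k => by
      by_cases h : k = i
      · simp [h, mul_assoc]
      · by_cases h' : k = i + 1 <;> simp [h, h', mul_assoc])
    (ext_hom _ _ fun k => by
      by_cases h : k = i
      · simp [h, mul_assoc]
      · by_cases h' : k = i + 1 <;> simp [h, h', mul_assoc])

@[simp] lemma gen_of_self (i : ℕ) : gen i (of i) = of i * of (i + 1) * (of i)⁻¹ := by
  simp [gen]

@[simp] lemma gen_of_succ (i : ℕ) : gen i (of (i + 1)) = of i := by
  simp [gen]

lemma gen_of_of_ne {i k : ℕ} (h : k ≠ i) (h' : k ≠ i + 1) : gen i (of k) = of k := by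
  simp [gen, h, h']

lemma gen_of_of_lt {i k : ℕ} (h : k < i) : gen i (of k) = of k :=
  gen_of_of_ne (by omega) (by omega)

lemma gen_of_of_gt {i k : ℕ} (h : i + 1 < k) : gen i (of k) = of k :=
  gen_of_of_ne (by omega) (by omega)

lemma gen_braid (i : ℕ) :
    gen i * gen (i + 1) * gen i =
      gen (i + 1) * gen i * gen (i + 1) := by
  refine FreeGroup.mulAut_ext fun k => ?_
  obtain rfl | rfl | rfl | ⟨h₀, h₁, h₂⟩ :
      k = i ∨ k = i + 1 ∨ k = i + 2 ∨ (k ≠ i ∧ k ≠ i + 1 ∧ k ≠ i + 2) := by omega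
  · simp [gen_of_of_lt, gen_of_of_gt, mul_assoc]
  · simp [gen_of_of_lt, gen_of_of_gt]
  · simp [gen_of_of_lt, gen_of_of_gt]
  · simp [gen_of_of_ne, *]

lemma gen_commute {i j : ℕ} (h : i + 1 < j) : Commute (gen i) (gen j) := by
  have hj₀ : gen j (of i) = of i := gen_of_of_lt (by omega)
  have hj₁ : gen j (of (i + 1)) = of (i + 1) := gen_of_of_lt (by omega)
  have hi₀ : gen i (of j) = of j := gen_of_of_gt h
  have hi₁ : gen i (of (j + 1)) = of (j + 1) := gen_of_of_gt (by omega)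
  refine FreeGroup.mulAut_ext fun k => ?_
  obtain rfl | rfl | rfl | rfl | ⟨h₀, h₁, h₂, h₃⟩ :
      k = i ∨ k = i + 1 ∨ k = j ∨ k = j + 1 ∨ (k ≠ i ∧ k ≠ i + 1 ∧ k ≠ j ∧ k ≠ j + 1) := by omega
  all_goals simp [gen_of_of_ne, *]

def chain : ℕ → MulAut (FreeGroup ℕ)
  | 0 => 1
  | k + 1 => gen k * chain k

def prodRange (a m : ℕ) : FreeGroup ℕ := ((List.range m).map fun t => of (t + a)).prod

@[simp] lemma prodRange_zero (a : ℕ) : prodRange a 0 = 1 := rfl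

lemma prodRange_succ (a m : ℕ) : prodRange a (m + 1) = prodRange a m * of (m + a) := by
  simp [prodRange, List.range_succ]

lemma gen_prodRange_zero {i m : ℕ} (h : m ≤ i) : gen i (prodRange 0 m) = prodRange 0 m := by
  induction m with
  | zero => simp
  | succ m ih => rw [prodRange_succ, map_mul, ih (by omega), gen_of_of_lt (by omega)]

lemma chain_of_gt {k t : ℕ} (h : k < t) : chain k (of t) = of t := by
  induction k with
  | zero => rfl
  | succ k ih =>
    rw [chain, MulAut.mul_apply, ih (by omega), gen_of_of_gt (by omega)]

lemma chain_of_succ {k t : ℕ} (h : t < k) : chain k (of (t + 1)) = of t := by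
  induction k with
  | zero => omega
  | succ k ih =>
    rw [chain, MulAut.mul_apply]
    rcases Nat.lt_succ_iff_lt_or_eq.mp h with h | rfl
    · rw [ih h, gen_of_of_lt h]
    · rw [chain_of_gt (by omega), gen_of_succ]

lemma chain_of_zero (k : ℕ) :
    chain k (of 0) = prodRange 0 k * of k * (prodRange 0 k)⁻¹ := by
  induction k with
  | zero => simp [chain]
  | succ k ih =>
    rw [chain, MulAut.mul_apply, ih, prodRange_succ]
    simp only [map_mul, map_inv, gen_prodRange_zero le_rfl, gen_of_self]
    group

lemma chain_prodRange_one {k m : ℕ} (h : m ≤ k) :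
    chain k (prodRange 1 m) = prodRange 0 m := by
  induction m with
  | zero => simp
  | succ m ih =>
    rw [prodRange_succ, prodRange_succ, map_mul, ih (by omega), chain_of_succ (by omega), add_zero]

def pure (m : ℕ) : MulAut (FreeGroup ℕ) := (chain m)⁻¹ * gen m ^ 2 * chain m

lemma pure_apply_eq_of {m : ℕ} {v w : FreeGroup ℕ}
    (h : gen m (gen m (chain m v)) = chain m w) : pure m v = w := by
  rw [pure, pow_two]
  simp only [MulAut.mul_apply]
  rw [h, MulAut.inv_apply_self]

lemma pure_of_zero (m : ℕ) :
    pure m (of 0) =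
      (of 0 * prodRange 1 m * of (m + 1) * (prodRange 1 m)⁻¹) * of 0 *
        (of 0 * prodRange 1 m * of (m + 1) * (prodRange 1 m)⁻¹)⁻¹ := by
  apply pure_apply_eq_of
  simp only [map_mul, map_inv, chain_of_zero, chain_prodRange_one le_rfl,
    chain_of_gt (Nat.lt_succ_self m), gen_prodRange_zero le_rfl, gen_of_self,
    gen_of_succ]
  group

lemma pure_of_succ_self (m : ℕ) :
    pure m (of (m + 1)) =
      ((prodRange 1 m)⁻¹ * of 0 * prodRange 1 m) * of (m + 1) *
        ((prodRange 1 m)⁻¹ * of 0 * prodRange 1 m)⁻¹ := by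
  apply pure_apply_eq_of
  simp only [map_mul, map_inv, chain_of_zero, chain_prodRange_one le_rfl,
    chain_of_gt (Nat.lt_succ_self m), gen_of_self, gen_of_succ]
  group

lemma pure_of_of_ne {m t : ℕ} (h₀ : t ≠ 0) (h : t ≠ m + 1) : pure m (of t) = of t := by
  apply pure_apply_eq_of
  obtain ⟨t, rfl⟩ : ∃ s, t = s + 1 := ⟨t - 1, by omega⟩
  rcases lt_or_gt_of_ne h with h | h
  · rw [chain_of_succ (by omega), gen_of_of_lt (by omega), gen_of_of_lt (by omega)]
  · rw [chain_of_gt (by omega), gen_of_of_gt h, gen_of_of_gt h]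

def forgetZero : FreeGroup ℕ →* FreeGroup ℕ :=
  lift fun
    | 0 => 1
    | t + 1 => of t

@[simp] lemma forgetZero_of_zero : forgetZero (of 0) = 1 := rfl

@[simp] lemma forgetZero_of_succ (t : ℕ) : forgetZero (of (t + 1)) = of t := rfl

lemma forgetZero_prodRange_one (m : ℕ) : forgetZero (prodRange 1 m) = prodRange 0 m := by
  induction m with
  | zero => simp
  | succ m ih => rw [prodRange_succ, prodRange_succ, map_mul, ih, forgetZero_of_succ, add_zero]

lemma forgetZero_pure (m : ℕ) (v : FreeGroup ℕ) : forgetZero (pure m v) = forgetZero v := by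
  suffices forgetZero.comp (pure m).toMonoidHom = forgetZero from DFunLike.congr_fun this v
  refine ext_hom _ _ fun t => ?_
  simp only [MonoidHom.comp_apply, MulEquiv.coe_toMonoidHom]
  obtain rfl | rfl | ⟨h₀, h⟩ : t = 0 ∨ t = m + 1 ∨ (t ≠ 0 ∧ t ≠ m + 1) := by omega
  · simp [pure_of_zero]
  · simp [pure_of_succ_self]
  · rw [pure_of_of_ne h₀ h]

def pureHom : FreeGroup ℕ →* MulAut (FreeGroup ℕ) := lift pure

lemma forgetZero_pureHom (w v : FreeGroup ℕ) : forgetZero (pureHom w v) = forgetZero v := by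
  induction w using FreeGroup.induction_on generalizing v with
  | C1 => rfl
  | of m => exact forgetZero_pure m v
  | inv_of m =>
    rw [map_inv, ← forgetZero_pure m, pureHom, FreeGroup.lift_apply_of, MulAut.apply_inv_self]
  | mul u u' hu hu' => rw [map_mul, MulAut.mul_apply, hu, hu']

def twist : FreeGroup ℕ →* FreeGroup ℕ := lift fun m => prodRange 0 m * (prodRange 0 (m + 1))⁻¹

lemma twist_prodRange (m : ℕ) : twist (prodRange 0 m) = (prodRange 0 m)⁻¹ := by
  induction m with
  | zero => simp
  | succ m ih =>
    rw [prodRange_succ, map_mul, ih, twist, FreeGroup.lift_apply_of, prodRange_succ, add_zero]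
    group

lemma twist_twist (w : FreeGroup ℕ) : twist (twist w) = w := by
  suffices twist.comp twist = MonoidHom.id _ from DFunLike.congr_fun this w
  refine ext_hom _ _ fun m => ?_
  simp only [MonoidHom.comp_apply, MonoidHom.id_apply, twist, FreeGroup.lift_apply_of]
  rw [map_mul, map_inv, ← twist, twist_prodRange, twist_prodRange, prodRange_succ, add_zero]
  group

lemma pureHom_of_zero (w : FreeGroup ℕ) :
    ∃ h, pureHom w (of 0) = h⁻¹ * of 0 * h ∧ forgetZero h = twist w := by
  induction w using FreeGroup.induction_on with
  | C1 => exact ⟨1, by simp, by simp⟩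
  | of m =>
    refine ⟨(of 0 * prodRange 1 m * of (m + 1) * (prodRange 1 m)⁻¹)⁻¹, ?_, ?_⟩
    · rw [pureHom, FreeGroup.lift_apply_of, pure_of_zero, inv_inv]
    · simp only [map_inv, map_mul, forgetZero_of_zero, forgetZero_of_succ,
        forgetZero_prodRange_one, twist, FreeGroup.lift_apply_of, prodRange_succ, add_zero]
      group
  | inv_of m ih =>
    obtain ⟨h, hh, hh'⟩ := ih
    refine ⟨(pureHom (of m))⁻¹ h⁻¹, ?_, ?_⟩
    · rw [map_inv]
      apply (pureHom (of m)).injective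
      simp only [map_mul, map_inv, MulAut.apply_inv_self, hh]
      group
    · rw [← map_inv, forgetZero_pureHom, map_inv, hh', map_inv]
  | mul u v hu hv =>
    obtain ⟨h, hh, hh'⟩ := hu
    obtain ⟨k, hk, hk'⟩ := hv
    refine ⟨h * pureHom u k, ?_, ?_⟩
    · rw [map_mul, MulAut.mul_apply, hk]
      simp only [map_mul, map_inv, hh]
      group
    · rw [map_mul, forgetZero_pureHom, hh', hk', map_mul]

theorem pureHom_injective : Function.Injective pureHom := by
  refine (injective_iff_map_eq_one _).mpr fun w hw => ?_
  obtain ⟨h, hh, hh'⟩ := pureHom_of_zero w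
  rw [hw, MulAut.one_apply] at hh
  have hcomm : Commute h (of 0) := by
    change h * of 0 = of 0 * h
    nth_rewrite 1 [hh]
    group
  have htwist : twist w = 1 := by
    rw [← hh']
    exact FreeGroup.lift_eq_one_of_commute_of _ 0 rfl hcomm
  rw [← twist_twist w, htwist, map_one]

end Artin

namespace Braid

variable {N : ℕ}

lemma sig_succ {l : ℕ} (hl : l ≤ N) : sig N (l + 1) = PresentedGroup.of ⟨l, by omega⟩ := by
  rw [sig, dif_pos ⟨by omega, by omega⟩]
  rfl

lemma sig_braid {l : ℕ} (hl : l + 1 ≤ N) :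
    sig N (l + 1) * sig N (l + 2) * sig N (l + 1) =
      sig N (l + 2) * sig N (l + 1) * sig N (l + 2) := by
  rw [sig_succ (by omega), sig_succ hl]
  exact PresentedGroup.mk_eq_mk_of_mul_inv_mem (Or.inl ⟨_, _, rfl, rfl⟩)

lemma sig_commute {l l' : ℕ} (h : l + 1 < l') : Commute (sig N l) (sig N l') := by
  unfold sig
  split_ifs with hl hl'
  · exact PresentedGroup.mk_eq_mk_of_mul_inv_mem (Or.inr ⟨_, _, by simp; omega, rfl⟩)
  all_goals simp

/-- `sigDesc N k = σ_k σ_{k-1} ⋯ σ_1`. -/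
def sigDesc (N k : ℕ) : Braid N := chain N 1 (k + 2)

@[simp] lemma sigDesc_zero : sigDesc N 0 = 1 := rfl

lemma sigDesc_succ (k : ℕ) : sigDesc N (k + 1) = sig N (k + 1) * sigDesc N k := by
  simp [sigDesc, chain, List.range_succ_eq_map, Function.comp_def]

lemma xgen_one (m : ℕ) : xgen N 1 (m + 2) = (sigDesc N m)⁻¹ * sig N (m + 1) ^ 2 * sigDesc N m :=
  rfl

lemma commute_sig_sigDesc {l k : ℕ} (h : k + 2 ≤ l) : Commute (sig N l) (sigDesc N k) := by
  induction k with
  | zero => exact Commute.one_right _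
  | succ k ih => rw [sigDesc_succ]; exact (sig_commute (by omega)).symm.mul_right (ih (by omega))

lemma sig_mul_sigDesc {a m : ℕ} (h : a + 2 ≤ m) (hm : m ≤ N + 1) :
    sig N (a + 1) * sigDesc N m = sigDesc N m * sig N (a + 2) := by
  induction m, h using Nat.le_induction with
  | base =>
    have e : sigDesc N (a + 2) = sig N (a + 2) * sig N (a + 1) * sigDesc N a := by
      rw [sigDesc_succ, sigDesc_succ, mul_assoc]
    calc sig N (a + 1) * sigDesc N (a + 2)
        = sig N (a + 1) * sig N (a + 2) * sig N (a + 1) * sigDesc N a := by rw [e]; group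
      _ = sig N (a + 2) * sig N (a + 1) * (sig N (a + 2) * sigDesc N a) := by
        rw [sig_braid (by omega)]; group
      _ = sigDesc N (a + 2) * sig N (a + 2) := by
        rw [(commute_sig_sigDesc le_rfl).eq, e]; group
  | succ m hm' ih =>
    rw [sigDesc_succ, ← mul_assoc, (sig_commute (by omega)).eq, mul_assoc, ih (by omega), mul_assoc]

lemma xgen_one_succ (n : ℕ) :
    xgen N 1 (n + 3) =
      (sigDesc N n)⁻¹ * ((sig N (n + 1))⁻¹ * sig N (n + 2) ^ 2 * sig N (n + 1)) * sigDesc N n := by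
  rw [xgen_one (n + 1), sigDesc_succ]
  group

lemma sig_conj_xgen_self {n : ℕ} (hn : n + 1 ≤ N) :
    sig N (n + 2) * xgen N 1 (n + 2) * (sig N (n + 2))⁻¹ = xgen N 1 (n + 3) := by
  rw [xgen_one, (commute_sig_sigDesc le_rfl).symm.conj_conj_inv, braid_conj_sq (sig_braid hn),
    xgen_one_succ]

lemma sig_conj_xgen_succ {n : ℕ} (hn : n + 1 ≤ N) :
    sig N (n + 2) * xgen N 1 (n + 3) * (sig N (n + 2))⁻¹ =
      (xgen N 1 (n + 3))⁻¹ * xgen N 1 (n + 2) * xgen N 1 (n + 3) := by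
  rw [xgen_one_succ, (commute_sig_sigDesc le_rfl).symm.conj_conj_inv,
    braid_conj_conj_sq (sig_braid hn), xgen_one]
  group

lemma sig_conj_xgen_of_ne {n m : ℕ} (hm : m ≤ N) (h₁ : m ≠ n) (h₂ : m ≠ n + 1) :
    sig N (n + 2) * xgen N 1 (m + 2) * (sig N (n + 2))⁻¹ = xgen N 1 (m + 2) := by
  rcases lt_or_gt_of_ne h₁ with h | h
  · have hc : Commute (sig N (n + 2)) (xgen N 1 (m + 2)) := by
      rw [xgen_one]
      have hd := commute_sig_sigDesc (N := N) (l := n + 2) (k := m) (by omega)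
      exact (hd.inv_right.mul_right ((sig_commute (by omega)).symm.pow_right 2)).mul_right hd
    exact hc.mul_inv_cancel
  · have hs : SemiconjBy (sigDesc N m) (sig N (n + 2)) (sig N (n + 1)) :=
      (sig_mul_sigDesc (by omega) (by omega)).symm
    rw [xgen_one, hs.conj_conj_inv, ((sig_commute (by omega)).pow_right 2).eq, mul_inv_cancel_right]

def firstStrandHom (N : ℕ) : FreeGroup (Fin (N + 1)) →* Braid N :=
  FreeGroup.lift fun i => xgen N 1 ((i : ℕ) + 2)

lemma xgen_mem_range {m : ℕ} (hm : m ≤ N) : xgen N 1 (m + 2) ∈ (firstStrandHom N).range :=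
  ⟨FreeGroup.of ⟨m, by omega⟩, FreeGroup.lift_apply_of⟩

lemma conj_sig_smul_range {n : ℕ} (hn : n + 1 ≤ N) :
    MulAut.conj (sig N (n + 2)) • (firstStrandHom N).range = (firstStrandHom N).range := by
  have hx := fun m (hm : m ≤ N) => xgen_mem_range (N := N) hm
  refine le_antisymm (conj_smul_range_lift_le _ fun ⟨m, hm⟩ => ?_) (FreeGroup.range_lift_le ?_)
  · obtain rfl | rfl | ⟨h₁, h₂⟩ : m = n ∨ m = n + 1 ∨ (m ≠ n ∧ m ≠ n + 1) := by omega
    · rw [sig_conj_xgen_self hn]; exact hx _ hn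
    · rw [sig_conj_xgen_succ hn]
      exact mul_mem (mul_mem (inv_mem (hx _ hn)) (hx _ (by omega))) (hx _ hn)
    · rw [sig_conj_xgen_of_ne (by omega) h₁ h₂]; exact hx _ (by omega)
  · have hconj : ∀ y ∈ (firstStrandHom N).range, sig N (n + 2) * y * (sig N (n + 2))⁻¹ ∈
        MulAut.conj (sig N (n + 2)) • (firstStrandHom N).range :=
      fun y hy => Subgroup.smul_mem_pointwise_smul y _ _ hy
    have hsucc := sig_conj_xgen_self hn ▸ hconj _ (hx n (by omega))
    rintro _ ⟨⟨m, hm⟩, rfl⟩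
    change xgen N 1 (m + 2) ∈ _
    obtain rfl | rfl | ⟨h₁, h₂⟩ : m = n ∨ m = n + 1 ∨ (m ≠ n ∧ m ≠ n + 1) := by omega
    · have e : xgen N 1 (m + 2) = xgen N 1 (m + 3) *
          (sig N (m + 2) * xgen N 1 (m + 3) * (sig N (m + 2))⁻¹) * (xgen N 1 (m + 3))⁻¹ := by
        rw [sig_conj_xgen_succ hn]; group
      rw [e]
      exact mul_mem (mul_mem hsucc (hconj _ (hx _ hn))) (inv_mem hsucc)
    · exact hsucc
    · rw [← sig_conj_xgen_of_ne (N := N) (by omega) h₁ h₂]; exact hconj _ (hx _ (by omega))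

/-- The conjugate `R_q` of the range, attached to the strand in position `q` (counting from `0`). -/
def strandSubgroup (N : ℕ) (q : Fin (N + 2)) : Subgroup (Braid N) :=
  MulAut.conj (sigDesc N q) • (firstStrandHom N).range

lemma conj_sig_smul_strandSubgroup (l : Fin (N + 1)) (q : Fin (N + 2)) :
    MulAut.conj (sig N (l + 1)) • strandSubgroup N q =
      strandSubgroup N (Equiv.swap l.castSucc l.succ q) := by
  obtain ⟨l, hl⟩ := l
  obtain ⟨q, hq⟩ := q
  unfold strandSubgroup
  rw [conj_smul_conj_smul]
  dsimp only
  rcases lt_trichotomy q l with h | rfl | h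
  · rw [Equiv.swap_apply_of_ne_of_ne (by simp [Fin.ext_iff]; omega) (by simp [Fin.ext_iff]; omega),
      (commute_sig_sigDesc (by omega)).eq, ← conj_smul_conj_smul]
    obtain ⟨n, rfl⟩ : ∃ n, l = n + 1 := ⟨l - 1, by omega⟩
    rw [conj_sig_smul_range (by omega)]
  · rw [show (⟨q, hq⟩ : Fin (N + 2)) = Fin.castSucc ⟨q, hl⟩ from rfl, Equiv.swap_apply_left,
      Fin.val_succ, ← sigDesc_succ]
  rcases Nat.lt_or_ge (l + 1) q with h' | h'
  · rw [Equiv.swap_apply_of_ne_of_ne (by simp [Fin.ext_iff]; omega) (by simp [Fin.ext_iff]; omega),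
      sig_mul_sigDesc h' (by omega), ← conj_smul_conj_smul, conj_sig_smul_range (by omega)]
  · obtain rfl : q = l + 1 := by omega
    rw [show (⟨l + 1, hq⟩ : Fin (N + 2)) = Fin.succ ⟨l, hl⟩ from rfl, Equiv.swap_apply_right]
    have e : sig N (l + 1) * sigDesc N (l + 1) = sigDesc N l * xgen N 1 (l + 2) := by
      rw [xgen_one, sigDesc_succ, pow_two]; group
    rw [Fin.val_castSucc, e, ← conj_smul_conj_smul,
      Subgroup.conj_smul_eq_self_of_mem (xgen_mem_range (by omega))]

section Permutation

variable (π : Braid N →* Equiv.Perm (Fin (N + 2)))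
  (hπ : ∀ l : Fin (N + 1), π (PresentedGroup.of l) = Equiv.swap l.castSucc l.succ)
include hπ

lemma conj_smul_strandSubgroup (g : Braid N) (q : Fin (N + 2)) :
    MulAut.conj g • strandSubgroup N q = strandSubgroup N (π g q) := by
  have hg : g ∈ Subgroup.closure (Set.range PresentedGroup.of) := by
    rw [PresentedGroup.closure_range_of]; trivial
  induction hg using Subgroup.closure_induction generalizing q with
  | mem _ hx =>
    obtain ⟨l, rfl⟩ := hx
    rw [hπ, ← conj_sig_smul_strandSubgroup, sig_succ l.is_le]
  | one => simp
  | mul x y _ _ hx hy => rw [map_mul, mul_smul, hy, hx, map_mul, Equiv.Perm.mul_apply]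
  | inv x _ hx =>
    obtain ⟨q, rfl⟩ := (π x).surjective q
    rw [← hx, map_inv, inv_smul_smul, map_inv, Equiv.Perm.inv_def, Equiv.symm_apply_apply]

lemma sig_sq_mem_ker (l : ℕ) : sig N l ^ 2 ∈ π.ker := by
  unfold sig
  split_ifs
  · rw [MonoidHom.mem_ker, map_pow, hπ, pow_two, Equiv.swap_mul_self]
  · simp

lemma range_le_ker : (firstStrandHom N).range ≤ π.ker := by
  refine FreeGroup.range_lift_le ?_
  rintro _ ⟨i, rfl⟩
  change xgen N 1 (i + 2) ∈ π.ker
  rw [xgen_one, MonoidHom.mem_ker, map_mul, map_mul, map_inv,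
    MonoidHom.mem_ker.mp (sig_sq_mem_ker π hπ _), mul_one, inv_mul_cancel]

lemma conj_mem_range_of_mem_ker {g : Braid N} (hg : g ∈ π.ker) {h : Braid N}
    (hh : h ∈ (firstStrandHom N).range) : g * h * g⁻¹ ∈ (firstStrandHom N).range := by
  have h0 := conj_smul_strandSubgroup π hπ g 0
  rw [MonoidHom.mem_ker.mp hg, Equiv.Perm.one_apply] at h0
  have hR : strandSubgroup N 0 = (firstStrandHom N).range := by
    rw [strandSubgroup, Fin.val_zero, sigDesc_zero, map_one, one_smul]
  rw [hR] at h0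
  rw [← h0]
  exact Subgroup.smul_mem_pointwise_smul h _ _ hh

end Permutation

def artinRep (N : ℕ) : Braid N →* MulAut (FreeGroup ℕ) :=
  PresentedGroup.toGroup (rels := braidRels N) (f := fun l : Fin (N + 1) => Artin.gen l) <| by
    rintro r (⟨i, j, hij, rfl⟩ | ⟨i, j, hij, rfl⟩)
    · simp only [map_mul, map_inv, FreeGroup.lift_apply_of, ← hij, Artin.gen_braid, mul_inv_cancel]
    · simp only [map_mul, map_inv, FreeGroup.lift_apply_of, (Artin.gen_commute hij).eq,
        mul_inv_cancel]

lemma artinRep_sig {l : ℕ} (hl : l ≤ N) : artinRep N (sig N (l + 1)) = Artin.gen l := by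
  rw [sig_succ hl, artinRep, PresentedGroup.toGroup.of]

lemma artinRep_sigDesc {k : ℕ} (hk : k ≤ N + 1) : artinRep N (sigDesc N k) = Artin.chain k := by
  induction k with
  | zero => simp [Artin.chain]
  | succ k ih => rw [sigDesc_succ, map_mul, artinRep_sig (by omega), ih (by omega), Artin.chain]

lemma artinRep_comp_firstStrandHom :
    (artinRep N).comp (firstStrandHom N) = Artin.pureHom.comp (FreeGroup.map Fin.val) := by
  refine FreeGroup.ext_hom _ _ fun ⟨m, hm⟩ => ?_
  simp only [MonoidHom.comp_apply, firstStrandHom, FreeGroup.lift_apply_of, FreeGroup.map.of,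
    Artin.pureHom, xgen_one, map_mul, map_inv, map_pow, artinRep_sig (by omega : m ≤ N),
    artinRep_sigDesc (by omega : m ≤ N + 1), Artin.pure]

theorem firstStrandHom_injective : Function.Injective (firstStrandHom N) := by
  have h := Artin.pureHom_injective.comp (FreeGroup.map_injective (Fin.val_injective (n := N + 1)))
  rw [← MonoidHom.coe_comp, ← artinRep_comp_firstStrandHom, MonoidHom.coe_comp] at h
  exact h.of_comp

end Braid

/-- Section 1.4, claims (a) and (b): in the braid group `B_{n+1}` (here
`n = N + 1 ≥ 1`, so `B_{n+1} = Braid N` has `N + 2` strands), the morphism from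
the free group on `n` generators sending the `i`-th generator to `x_{1,i+2}`
(i.e. to `x_{12}, …, x_{1,n+1}`) is injective, and its range is a normal
subgroup of the pure braid group `PB_{n+1} = ker (B_{n+1} → S_{n+1})`. -/
theorem free_subgroup_of_pure_braid (N : ℕ) :
    Function.Injective
      (FreeGroup.lift fun i : Fin (N + 1) => xgen N 1 ((i : ℕ) + 2)) ∧
    ∀ π : Braid N →* Equiv.Perm (Fin (N + 2)),
      (∀ l : Fin (N + 1),
        π (PresentedGroup.of l) = Equiv.swap l.castSucc l.succ) →
      (FreeGroup.lift fun i : Fin (N + 1) => xgen N 1 ((i : ℕ) + 2)).range ≤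
          π.ker ∧
        ∀ g ∈ π.ker,
          ∀ h ∈ (FreeGroup.lift fun i : Fin (N + 1) => xgen N 1 ((i : ℕ) + 2)).range,
            g * h * g⁻¹ ∈
              (FreeGroup.lift fun i : Fin (N + 1) => xgen N 1 ((i : ℕ) + 2)).range :=
  ⟨Braid.firstStrandHom_injective, fun π hπ =>
    ⟨Braid.range_le_ker π hπ, fun _ hg _ hh => Braid.conj_mem_range_of_mem_ker π hπ hg hh⟩⟩
end

section
/- Let n ≥ 1 and let F_n = FreeGroup (Fin n) with generators X_1, …, X_n. For 1 ≤ i ≤ n let A_{0i} be the inner automorphism of F_n given by conjugation by X_i, and for 1 ≤ i < j ≤ n let A_{ij} be the group endomorphism of F_n determined on generators by: A_{ij}(X_i) = X_j^{−1} X_i X_j, A_{ij}(X_j) = (X_i X_j)^{−1} X_j (X_i X_j), A_{ij}(X_k) = X_k for k < i or k > j, and A_{ij}(X_k) = (X_j^{−1} X_i^{−1} X_j X_i) X_k (X_j^{−1} X_i^{−1} X_j X_i)^{−1} for i < k < j. Then: (i) each A_{ij} is an automorphism of F_n; (ii) for all 0 ≤ a < b < c ≤ n, the automorphism A_{ab}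 ∘ A_{ac} ∘ A_{bc} commutes with each of A_{ab}, A_{ac}, A_{bc} in Aut(F_n); and (iii) for all 0 ≤ a < b < c < d ≤ n, A_{ab} commutes with A_{cd} and A_{ad} commutes with A_{bc} in Aut(F_n). -/
/-!
Every `A_{ab}` is an endomorphism of a free group, so each identity can be checked on the
generators `X_l`, splitting on the position of `l` relative to the strands involved; every case
is then an identity of words. The relations involving strand `0` need no case split:
`A_{0j} A_{0k}` is conjugation by `X_j X_k`, which `A_{jk}` fixes, and `f ∘ conj g = conj (f g) ∘ f`
for every endomorphism `f`.
-/

open FreeGroup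

section Conjugation

variable {G : Type*} [Group G]

def conjEnd (g : G) : Monoid.End G := (MulAut.conj g : G →* G)

@[simp] lemma conjEnd_apply (g x : G) : conjEnd g x = g * x * g⁻¹ := rfl

lemma conjEnd_mul (g h : G) : conjEnd (g * h) = conjEnd g * conjEnd h := by
  ext x; simp [mul_assoc]

lemma mul_conjEnd (f : Monoid.End G) (g : G) : f * conjEnd g = conjEnd (f g) * f := by
  ext x; simp

lemma commute_conjEnd_of_apply_eq {f : Monoid.End G} {g : G} (h : f g = g) :
    Commute (conjEnd g) f := by
  rw [Commute, SemiconjBy, mul_conjEnd, h]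

lemma commute_conjEnd_mul_self {f : Monoid.End G} {u : G} (h : f u = u) :
    Commute (conjEnd u * f) f := by
  rw [Commute, SemiconjBy, ← mul_assoc, mul_conjEnd, h]

lemma commute_conjEnd_mul_conjEnd {f : Monoid.End G} {u x : G} (h : f x = u⁻¹ * x * u) :
    Commute (conjEnd u * f) (conjEnd x) := by
  rw [Commute, SemiconjBy, mul_assoc, mul_conjEnd, ← mul_assoc, ← mul_assoc, ← conjEnd_mul,
    ← conjEnd_mul, h]
  group

end Conjugation

namespace FreeGroup

variable {α : Type*} {f g : Monoid.End (FreeGroup α)}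

lemma end_ext (h : ∀ a, f (of a) = g (of a)) : f = g :=
  ext_hom f g h

lemma commute_of_apply_of (h : ∀ a, f (g (of a)) = g (f (of a))) : Commute f g :=
  end_ext (f := f * g) (g := g * f) h

lemma bijective_of_apply_of (h₁ : ∀ a, g (f (of a)) = of a) (h₂ : ∀ a, f (g (of a)) = of a) :
    Function.Bijective f :=
  Function.bijective_iff_has_inverse.2 ⟨g, DFunLike.congr_fun (end_ext (f := g * f) (g := 1) h₁),
    DFunLike.congr_fun (end_ext (f := f * g) (g := 1) h₂)⟩

end FreeGroup

namespace PureBraid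

variable {n : ℕ}

def segmentConj (i j : Fin n) (u v : FreeGroup (Fin n)) : Monoid.End (FreeGroup (Fin n)) :=
  FreeGroup.lift fun l =>
    if l = i ∨ l = j then u * of l * u⁻¹ else if i < l ∧ l < j then v * of l * v⁻¹ else of l

section segmentConj

variable {i j l : Fin n} {u v : FreeGroup (Fin n)}

lemma segmentConj_of_of_eq_or_eq (h : l = i ∨ l = j) :
    segmentConj i j u v (of l) = u * of l * u⁻¹ :=
  lift_apply_of.trans (if_pos h)

lemma segmentConj_of_of_mid (hi : i < l) (hj : l < j) :
    segmentConj i j u v (of l) = v * of l * v⁻¹ :=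
  lift_apply_of.trans ((if_neg (by omega)).trans (if_pos ⟨hi, hj⟩))

lemma segmentConj_of_of_outside (hi : l ≠ i) (hj : l ≠ j) (hm : ¬(i < l ∧ l < j)) :
    segmentConj i j u v (of l) = of l :=
  lift_apply_of.trans ((if_neg (by tauto)).trans (if_neg hm))

end segmentConj

-- The paper's `A_{ij}` conjugates `X_i` and `X_j` by the same element `(X_i X_j)⁻¹`.
def adSucc (i j : Fin n) : Monoid.End (FreeGroup (Fin n)) :=
  segmentConj i j (of i * of j)⁻¹ ((of j)⁻¹ * (of i)⁻¹ * of j * of i)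

-- `adSucc i j` fixes `X_i X_j` and sends `⁅X_i, X_j⁆` to the inverse of its middle conjugator.
def adSuccInv (i j : Fin n) : Monoid.End (FreeGroup (Fin n)) :=
  segmentConj i j (of i * of j) (of i * of j * (of i)⁻¹ * (of j)⁻¹)

section adSucc

variable {i j l : Fin n}

lemma adSucc_of_left : adSucc i j (of i) = (of j)⁻¹ * of i * of j := by
  rw [adSucc, segmentConj_of_of_eq_or_eq (.inl rfl)]; group

lemma adSucc_of_right : adSucc i j (of j) = (of i * of j)⁻¹ * of j * (of i * of j) := by
  rw [adSucc, segmentConj_of_of_eq_or_eq (.inr rfl), inv_inv]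

lemma adSucc_of_of_mid (hi : i < l) (hj : l < j) :
    adSucc i j (of l) =
      ((of j)⁻¹ * (of i)⁻¹ * of j * of i) * of l * ((of j)⁻¹ * (of i)⁻¹ * of j * of i)⁻¹ :=
  segmentConj_of_of_mid hi hj

lemma adSucc_of_of_outside (hi : l ≠ i) (hj : l ≠ j) (hm : ¬(i < l ∧ l < j)) :
    adSucc i j (of l) = of l :=
  segmentConj_of_of_outside hi hj hm

lemma adSucc_of_mul_of : adSucc i j (of i * of j) = of i * of j := by
  rw [_root_.map_mul, adSucc_of_left, adSucc_of_right]; group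

lemma eq_adSucc {f : Monoid.End (FreeGroup (Fin n))} (hij : i < j)
    (hi : f (of i) = (of j)⁻¹ * of i * of j)
    (hj : f (of j) = (of i * of j)⁻¹ * of j * (of i * of j))
    (hout : ∀ l, l < i ∨ j < l → f (of l) = of l)
    (hmid : ∀ l, i < l → l < j →
      f (of l) =
        ((of j)⁻¹ * (of i)⁻¹ * of j * of i) * of l * ((of j)⁻¹ * (of i)⁻¹ * of j * of i)⁻¹) :
    f = adSucc i j := by
  refine end_ext fun l => ?_
  obtain h | rfl | h | rfl | h : l < i ∨ l = i ∨ (i < l ∧ l < j) ∨ l = j ∨ j < l := by omega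
  · rw [hout l (.inl h), adSucc_of_of_outside (by omega) (by omega) (by omega)]
  · rw [hi, adSucc_of_left]
  · rw [hmid l h.1 h.2, adSucc_of_of_mid h.1 h.2]
  · rw [hj, adSucc_of_right]
  · rw [hout l (.inr h), adSucc_of_of_outside (by omega) (by omega) (by omega)]

end adSucc

variable {i j k m : Fin n}

lemma adSucc_bijective (hij : i < j) : Function.Bijective (adSucc i j) := by
  refine bijective_of_apply_of (g := adSuccInv i j) (fun l => ?_) (fun l => ?_) <;>
  obtain h | rfl | h | rfl | h : l < i ∨ l = i ∨ (i < l ∧ l < j) ∨ l = j ∨ j < l := by omega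
  all_goals
    simp (disch := omega) only [adSuccInv, _root_.map_mul, _root_.map_inv, adSucc_of_left,
      adSucc_of_right, adSucc_of_of_mid, adSucc_of_of_outside, segmentConj_of_of_eq_or_eq,
      segmentConj_of_of_mid, segmentConj_of_of_outside] <;>
    group

lemma adSucc_triple_commute (hij : i < j) (hjk : j < k) :
    Commute (adSucc i j * adSucc i k * adSucc j k) (adSucc i j) ∧
    Commute (adSucc i j * adSucc i k * adSucc j k) (adSucc i k) ∧
    Commute (adSucc i j * adSucc i k * adSucc j k) (adSucc j k) := by
  refine ⟨?_, ?_, ?_⟩ <;> refine commute_of_apply_of fun l => ?_ <;>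
  obtain h | rfl | h | rfl | h | rfl | h :
    l < i ∨ l = i ∨ (i < l ∧ l < j) ∨ l = j ∨ (j < l ∧ l < k) ∨ l = k ∨ k < l := by omega
  all_goals
    simp (disch := omega) only [Monoid.End.coe_mul, Function.comp_apply, _root_.map_mul,
      _root_.map_inv, adSucc_of_left, adSucc_of_right, adSucc_of_of_mid, adSucc_of_of_outside] <;>
    group

lemma adSucc_commute_of_lt (hij : i < j) (hjk : j < k) (hkm : k < m) :
    Commute (adSucc i j) (adSucc k m) := by
  refine commute_of_apply_of fun l => ?_
  obtain h | rfl | h | rfl | h | rfl | h | rfl | h :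
    l < i ∨ l = i ∨ (i < l ∧ l < j) ∨ l = j ∨ (j < l ∧ l < k) ∨ l = k ∨ (k < l ∧ l < m) ∨
      l = m ∨ m < l := by omega
  all_goals
    simp (disch := omega) only [_root_.map_mul, _root_.map_inv, adSucc_of_left, adSucc_of_right,
      adSucc_of_of_mid, adSucc_of_of_outside]

lemma adSucc_commute_nested (hij : i < j) (hjk : j < k) (hkm : k < m) :
    Commute (adSucc i m) (adSucc j k) := by
  refine commute_of_apply_of fun l => ?_
  obtain h | rfl | h | rfl | h | rfl | h | rfl | h :
    l < i ∨ l = i ∨ (i < l ∧ l < j) ∨ l = j ∨ (j < l ∧ l < k) ∨ l = k ∨ (k < l ∧ l < m) ∨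
      l = m ∨ m < l := by omega
  all_goals
    simp (disch := omega) only [_root_.map_mul, _root_.map_inv, adSucc_of_left, adSucc_of_right,
      adSucc_of_of_mid, adSucc_of_of_outside] <;>
    group

def ad (a b : Fin (n + 1)) : Monoid.End (FreeGroup (Fin n)) :=
  Fin.cases (Fin.cases 1 fun j => conjEnd (of j)) (fun i => Fin.cases 1 fun j => adSucc i j) a b

@[simp] lemma ad_zero_succ (j : Fin n) : ad 0 j.succ = conjEnd (of j) := rfl

@[simp] lemma ad_succ_succ (i j : Fin n) : ad i.succ j.succ = adSucc i j := rfl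

lemma ad_bijective {a b : Fin (n + 1)} (hab : a < b) : Function.Bijective (ad a b) := by
  obtain ⟨j, rfl⟩ := Fin.exists_succ_eq.2 (Fin.ne_zero_of_lt hab)
  cases a using Fin.cases with
  | zero => exact (MulAut.conj (of j)).bijective
  | succ i => exact adSucc_bijective (Fin.succ_lt_succ_iff.1 hab)

lemma ad_triple_commute {a b c : Fin (n + 1)} (hab : a < b) (hbc : b < c) :
    Commute (ad a b * ad a c * ad b c) (ad a b) ∧
    Commute (ad a b * ad a c * ad b c) (ad a c) ∧
    Commute (ad a b * ad a c * ad b c) (ad b c) := by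
  obtain ⟨j, rfl⟩ := Fin.exists_succ_eq.2 (Fin.ne_zero_of_lt hab)
  obtain ⟨k, rfl⟩ := Fin.exists_succ_eq.2 (Fin.ne_zero_of_lt hbc)
  have hjk := Fin.succ_lt_succ_iff.1 hbc
  cases a using Fin.cases with
  | zero =>
    simp only [ad_zero_succ, ad_succ_succ, ← conjEnd_mul]
    refine ⟨commute_conjEnd_mul_conjEnd ?_, commute_conjEnd_mul_conjEnd ?_,
      commute_conjEnd_mul_self adSucc_of_mul_of⟩
    · rw [adSucc_of_left]; group
    · rw [adSucc_of_right]
  | succ i =>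
    simp only [ad_succ_succ]
    exact adSucc_triple_commute (Fin.succ_lt_succ_iff.1 hab) hjk

lemma ad_commute_of_lt {a b c d : Fin (n + 1)} (hab : a < b) (hbc : b < c) (hcd : c < d) :
    Commute (ad a b) (ad c d) ∧ Commute (ad a d) (ad b c) := by
  obtain ⟨j, rfl⟩ := Fin.exists_succ_eq.2 (Fin.ne_zero_of_lt hab)
  obtain ⟨k, rfl⟩ := Fin.exists_succ_eq.2 (Fin.ne_zero_of_lt hbc)
  obtain ⟨m, rfl⟩ := Fin.exists_succ_eq.2 (Fin.ne_zero_of_lt hcd)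
  have hjk := Fin.succ_lt_succ_iff.1 hbc
  have hkm := Fin.succ_lt_succ_iff.1 hcd
  cases a using Fin.cases with
  | zero =>
    simp only [ad_zero_succ, ad_succ_succ]
    exact ⟨commute_conjEnd_of_apply_eq (adSucc_of_of_outside (by omega) (by omega) (by omega)),
      commute_conjEnd_of_apply_eq (adSucc_of_of_outside (by omega) (by omega) (by omega))⟩
  | succ i =>
    have hij := Fin.succ_lt_succ_iff.1 hab
    simp only [ad_succ_succ]
    exact ⟨adSucc_commute_of_lt hij hjk hkm, adSucc_commute_nested hij hjk hkm⟩

end PureBraid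

theorem pure_braid_action_on_free_group_general (n : ℕ)
    (A : Fin (n + 1) → Fin (n + 1) → Monoid.End (FreeGroup (Fin n)))
    (h0 : ∀ (i : Fin n) (g : FreeGroup (Fin n)),
      A 0 i.succ g = of i * g * (of i)⁻¹)
    (hii : ∀ i j : Fin n, i < j →
      A i.succ j.succ (of i) = (of j)⁻¹ * of i * of j)
    (hjj : ∀ i j : Fin n, i < j →
      A i.succ j.succ (of j) = (of i * of j)⁻¹ * of j * (of i * of j))
    (hout : ∀ i j l : Fin n, i < j → (l < i ∨ j < l) →
      A i.succ j.succ (of l) = of l)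
    (hmid : ∀ i j l : Fin n, i < j → i < l → l < j →
      A i.succ j.succ (of l) =
        ((of j)⁻¹ * (of i)⁻¹ * of j * of i) * of l *
          ((of j)⁻¹ * (of i)⁻¹ * of j * of i)⁻¹) :
    (∀ a b : Fin (n + 1), a < b → Function.Bijective (A a b)) ∧
    (∀ a b c : Fin (n + 1), a < b → b < c →
      Commute (A a b * A a c * A b c) (A a b) ∧
      Commute (A a b * A a c * A b c) (A a c) ∧
      Commute (A a b * A a c * A b c) (A b c)) ∧
    (∀ a b c d : Fin (n + 1), a < b → b < c → c < d →
      Commute (A a b) (A c d) ∧ Commute (A a d) (A b c)) := by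
  have hA : ∀ {a b : Fin (n + 1)}, a < b → A a b = PureBraid.ad a b := by
    intro a b hab
    obtain ⟨j, rfl⟩ := Fin.exists_succ_eq.2 (Fin.ne_zero_of_lt hab)
    cases a using Fin.cases with
    | zero => exact MonoidHom.ext (h0 j)
    | succ i =>
      have hij := Fin.succ_lt_succ_iff.1 hab
      exact PureBraid.eq_adSucc hij (hii i j hij) (hjj i j hij) (fun l => hout i j l hij)
        (fun l => hmid i j l hij)
  refine ⟨fun a b hab => ?_, fun a b c hab hbc => ?_, fun a b c d hab hbc hcd => ?_⟩
  · rw [hA hab]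
    exact PureBraid.ad_bijective hab
  · rw [hA hab, hA hbc, hA (hab.trans hbc)]
    exact PureBraid.ad_triple_commute hab hbc
  · rw [hA hab, hA hbc, hA hcd, hA (hab.trans (hbc.trans hcd))]
    exact PureBraid.ad_commute_of_lt hab hbc hcd

/-- Section 1.4: the explicit formulas for the conjugation action
`Ad : PB_{n+1} → Aut(F_n)` define automorphisms of the free group `F_n`
satisfying the pure braid relations.  Strand indices `{0, …, n}` are modelled by
`Fin (n+1)`; the generator `X_i` (`1 ≤ i ≤ n`) is `FreeGroup.of i` with
`i : Fin n`, its strand index being `i.succ`.  `A_{0i}` is conjugation by `X_i`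
and `A_{ij}` (for `1 ≤ i < j ≤ n`) is given by the formulas of the paper.  Then
each `A_{ab}` is bijective, `A_{ab} A_{ac} A_{bc}` commutes with each of
`A_{ab}, A_{ac}, A_{bc}` for `a < b < c`, and `A_{ab}` commutes with `A_{cd}`
and `A_{ad}` with `A_{bc}` for `a < b < c < d` (products of endomorphisms being
composition). -/
theorem pure_braid_action_on_free_group (n : ℕ) (hn : 1 ≤ n)
    (A : Fin (n + 1) → Fin (n + 1) → Monoid.End (FreeGroup (Fin n)))
    (h0 : ∀ (i : Fin n) (g : FreeGroup (Fin n)),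
      A 0 i.succ g = of i * g * (of i)⁻¹)
    (hii : ∀ i j : Fin n, i < j →
      A i.succ j.succ (of i) = (of j)⁻¹ * of i * of j)
    (hjj : ∀ i j : Fin n, i < j →
      A i.succ j.succ (of j) = (of i * of j)⁻¹ * of j * (of i * of j))
    (hout : ∀ i j l : Fin n, i < j → (l < i ∨ j < l) →
      A i.succ j.succ (of l) = of l)
    (hmid : ∀ i j l : Fin n, i < j → i < l → l < j →
      A i.succ j.succ (of l) =
        ((of j)⁻¹ * (of i)⁻¹ * of j * of i) * of l *
          ((of j)⁻¹ * (of i)⁻¹ * of j * of i)⁻¹) :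
    (∀ a b : Fin (n + 1), a < b → Function.Bijective (A a b)) ∧
    (∀ a b c : Fin (n + 1), a < b → b < c →
      Commute (A a b * A a c * A b c) (A a b) ∧
      Commute (A a b * A a c * A b c) (A a c) ∧
      Commute (A a b * A a c * A b c) (A b c)) ∧
    (∀ a b c d : Fin (n + 1), a < b → b < c → c < d →
      Commute (A a b) (A c d) ∧ Commute (A a d) (A b c)) :=
  pure_braid_action_on_free_group_general n A h0 hii hjj hout hmid
end

section
/- Let F_2 = FreeGroup (Fin 2) with generators X, Y. For f ∈ F_2 and elements u, v of a group G, write f(u, v) for the image of f under the homomorphism F_2 → G sending X ↦ u, Y ↦ v. For f ∈ F_2 define the endomorphism α_f of F_2 determined on generators by α_f(X) = f(X, Y^{−1}X^{−1}) · X · f(X, Y^{−1}X^{−1})^{−1} and α_f(Y) = f(Y, Y^{−1}X^{−1}) · Y · f(Y, Y^{−1}X^{−1})^{−1}, and for f_1, f_2 ∈ F_2 define the product (f_1 * f_2) := f_1(f_2 X f_2^{−1}, Y) · f_2. Then for all f_1, f_2 ∈ F_2 such that α_{f_2}(X·Y) = X·Y, one has α_{f_1 * f_2} = α_{f_2} ∘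 α_{f_1} as endomorphisms of F_2. -/
/-- `X`, the first generator of the free group `F_2`. -/
def Xg : FreeGroup (Fin 2) := FreeGroup.of 0

/-- `Y`, the second generator of the free group `F_2`. -/
def Yg : FreeGroup (Fin 2) := FreeGroup.of 1

/-- Evaluation `f(u, v)` of a word `f ∈ F_2` at elements `u, v` of a group `G`. -/
def ev {G : Type*} [Group G] (f : FreeGroup (Fin 2)) (u v : G) : G :=
  FreeGroup.lift ![u, v] f

/-- The endomorphism `α_f` of `F_2` determined on generators by
`α_f(X) = f(X, Y⁻¹X⁻¹) X f(X, Y⁻¹X⁻¹)⁻¹` and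
`α_f(Y) = f(Y, Y⁻¹X⁻¹) Y f(Y, Y⁻¹X⁻¹)⁻¹`. -/
def alphaEnd (f : FreeGroup (Fin 2)) : FreeGroup (Fin 2) →* FreeGroup (Fin 2) :=
  FreeGroup.lift
    ![ev f Xg (Yg⁻¹ * Xg⁻¹) * Xg * (ev f Xg (Yg⁻¹ * Xg⁻¹))⁻¹,
      ev f Yg (Yg⁻¹ * Xg⁻¹) * Yg * (ev f Yg (Yg⁻¹ * Xg⁻¹))⁻¹]

/-- The Grothendieck–Teichmüller product `(f₁ * f₂) = f₁(f₂ X f₂⁻¹, Y) · f₂`. -/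
def gtMul (f₁ f₂ : FreeGroup (Fin 2)) : FreeGroup (Fin 2) :=
  ev f₁ (f₂ * Xg * f₂⁻¹) Yg * f₂


lemma ev_hom {G H : Type*} [Group G] [Group H] (φ : G →* H) (f : FreeGroup (Fin 2))
    (u v : G) : φ (ev f u v) = ev f (φ u) (φ v) := by
  have : φ.comp (FreeGroup.lift ![u, v]) = FreeGroup.lift ![φ u, φ v] := by
    ext i
    fin_cases i <;> simp
  simpa [ev] using congrFun (congrArg DFunLike.coe this) f

lemma ev_ev (f u v a b : FreeGroup (Fin 2)) :
    ev (ev f u v) a b = ev f (ev u a b) (ev v a b) :=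
  ev_hom (FreeGroup.lift ![a, b]) f u v

@[simp] lemma ev_X {G : Type*} [Group G] (u v : G) : ev Xg u v = u := by
  simp [ev, Xg]

@[simp] lemma ev_Y {G : Type*} [Group G] (u v : G) : ev Yg u v = v := by
  simp [ev, Yg]

@[simp] lemma alphaEnd_X (f : FreeGroup (Fin 2)) :
    alphaEnd f Xg = ev f Xg (Yg⁻¹ * Xg⁻¹) * Xg * (ev f Xg (Yg⁻¹ * Xg⁻¹))⁻¹ := by
  simp [alphaEnd, Xg]

@[simp] lemma alphaEnd_Y (f : FreeGroup (Fin 2)) :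
    alphaEnd f Yg = ev f Yg (Yg⁻¹ * Xg⁻¹) * Yg * (ev f Yg (Yg⁻¹ * Xg⁻¹))⁻¹ := by
  simp [alphaEnd, Yg]

@[simp] lemma ev_mul {G : Type*} [Group G] (f g : FreeGroup (Fin 2)) (u v : G) :
    ev (f * g) u v = ev f u v * ev g u v := map_mul _ _ _

@[simp] lemma ev_inv {G : Type*} [Group G] (f : FreeGroup (Fin 2)) (u v : G) :
    ev f⁻¹ u v = (ev f u v)⁻¹ := map_inv _ _

/-- Section 6.3: for `f₁, f₂ ∈ F_2` with `α_{f₂}(XY) = XY`, one has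
`α_{f₁ * f₂} = α_{f₂} ∘ α_{f₁}`. -/
theorem alpha_antimorphism (f₁ f₂ : FreeGroup (Fin 2))
    (h : alphaEnd f₂ (Xg * Yg) = Xg * Yg) :
    alphaEnd (gtMul f₁ f₂) = (alphaEnd f₂).comp (alphaEnd f₁) := by
  have h' : alphaEnd f₂ (Yg⁻¹ * Xg⁻¹) = Yg⁻¹ * Xg⁻¹ := by
    have := congrArg (·⁻¹) h
    simpa [mul_inv_rev] using this
  have hev : ∀ x y : FreeGroup (Fin 2), alphaEnd f₂ (ev f₁ x y)
      = ev f₁ (alphaEnd f₂ x) (alphaEnd f₂ y) := fun x y => ev_hom _ _ _ _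
  ext i
  fin_cases i
  · show alphaEnd (gtMul f₁ f₂) Xg = (alphaEnd f₂) (alphaEnd f₁ Xg)
    simp only [gtMul, alphaEnd_X, map_mul, map_inv, hev, h', ev_mul, ev_inv,
      ev_ev, ev_X, ev_Y]
    group
  · show alphaEnd (gtMul f₁ f₂) Yg = (alphaEnd f₂) (alphaEnd f₁ Yg)
    simp only [gtMul, alphaEnd_Y, alphaEnd_X, map_mul, map_inv, hev, h', ev_mul, ev_inv,
      ev_ev, ev_X, ev_Y]
    group
end

section
/- Let k be a field of characteristic 0, let A = FreeAlgebra k (Fin 2) with generators x_1, x_2, let C ⊆ A be the k-linear span of {ab − ba : a, b ∈ A}, and let ⟨·⟩ : A → A/C be the quotient map. For a polynomial f ∈ k[u], let f(a) ∈ A denote the evaluation of f at a ∈ A (via the algebra map k[u] → A, u ↦ a). Then ⟨f(x_1 + x_2) − f(x_1) − f(x_2)⟩ = 0 if and only if f is a scalar multiple of u, i.e. ∃ c ∈ k, f = c·u. -/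
/-!
An algebra map into a commutative algebra kills all commutators. Sending both generators to `t`
in `k[t]` therefore turns `⟨f(x₁ + x₂) − f(x₁) − f(x₂)⟩ = 0` into `f(2t) = 2 f(t)`, i.e.
`2ⁿ aₙ = 2 aₙ` for every coefficient `aₙ` of `f`; in characteristic zero only `a₁` survives.
-/

open Polynomial

theorem Polynomial.eq_coeff_one_smul_X_of_comp_two_mul_X {R : Type*} [CommRing R] [IsDomain R]
    [CharZero R] {p : R[X]} (h : p.comp (C 2 * X) = C 2 * p) : p = p.coeff 1 • X := by
  ext n
  have hn : p.coeff n * 2 ^ n = 2 * p.coeff n := by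
    simpa using congrArg (coeff · n) h
  rcases eq_or_ne n 1 with rfl | hn1
  · simp
  · have h2 : (2 : R) ^ n ≠ 2 :=
      mod_cast fun h => hn1 (Nat.pow_right_injective le_rfl (by simpa using h))
    have : p.coeff n * (2 ^ n - 2) = 0 := by rw [mul_sub, hn]; ring
    simp [coeff_X_of_ne_one hn1, (mul_eq_zero.1 this).resolve_right (sub_ne_zero.2 h2)]

theorem AlgHom.map_eq_zero_of_mem_span_commutators {R A B : Type*} [CommSemiring R] [Ring A]
    [CommRing B] [Algebra R A] [Algebra R B] (φ : A →ₐ[R] B) {z : A}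
    (hz : z ∈ Submodule.span R {x | ∃ a b : A, x = a * b - b * a}) : φ z = 0 := by
  suffices Submodule.span R {x | ∃ a b : A, x = a * b - b * a} ≤ LinearMap.ker φ.toLinearMap from
    this hz
  rw [Submodule.span_le]
  rintro _ ⟨a, b, rfl⟩
  simp [mul_comm]

/-- Section 1.1: the kernel of `δ : 𝔉_1 → 𝔉_2` is spanned by the class of `x_1`.
Concretely: in `A = FreeAlgebra k (Fin 2)` with `C` the span of commutators and
`⟨·⟩ : A → A ⧸ C` the projection, for a polynomial `f ∈ k[u]` one has
`⟨f(x₁ + x₂) − f(x₁) − f(x₂)⟩ = 0` if and only if `f` is a scalar multiple of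
`u`. -/
theorem kernel_delta_one (k : Type) [Field k] [CharZero k] (f : Polynomial k)
    (C : Submodule k (FreeAlgebra k (Fin 2)))
    (hC : C = Submodule.span k
      {x : FreeAlgebra k (Fin 2) | ∃ a b : FreeAlgebra k (Fin 2), x = a * b - b * a}) :
    C.mkQ (Polynomial.aeval (FreeAlgebra.ι k (0 : Fin 2) + FreeAlgebra.ι k 1) f -
        Polynomial.aeval (FreeAlgebra.ι k (0 : Fin 2)) f -
        Polynomial.aeval (FreeAlgebra.ι k (1 : Fin 2)) f) = 0 ↔
      ∃ c : k, f = c • Polynomial.X := by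
  rw [Submodule.mkQ_apply, Submodule.Quotient.mk_eq_zero, hC]
  constructor
  · intro h
    refine ⟨f.coeff 1, eq_coeff_one_smul_X_of_comp_two_mul_X ?_⟩
    have hdiag := (FreeAlgebra.lift k fun _ => (X : k[X])).map_eq_zero_of_mem_span_commutators h
    simp only [map_sub, ← aeval_algHom_apply, map_add, FreeAlgebra.lift_ι_apply, aeval_X_left,
      AlgHom.id_apply] at hdiag
    rw [map_ofNat, two_mul, two_mul, comp_eq_aeval]
    linear_combination hdiag
  · rintro ⟨c, rfl⟩
    simp
end

section
/- Let X be a type. Let w : FreeMagma X → FreeSemigroup X be the magma homomorphism extending x ↦ of x (FreeSemigroup X viewed as a magma), let P : FreeMagma X → FreeMagma PUnit be FreeMagma.map of the constant map X → PUnit, and let w_0 : FreeMagma PUnit → FreeSemigroup PUnit be the analogous magma homomorphism for PUnit. Then for every s ∈ FreeSemigroup X and every p ∈ FreeMagma PUnit such that FreeSemigroup.map (fun _ => PUnit.unit) s = w_0(p), there exists a unique m ∈ FreeMagma X with w(m) = s and P(m) = p. (In other words, the commuting square formed by w, P, w_0 and FreeSemigroup.map is Cartesian: the free magma on X is the fibered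 product of the free semigroup on X and the free magma on one generator over the free semigroup on one generator.) -/
/-!
A parenthesized word is recovered from its underlying word and its shape by induction on the
shape: the shape `p₁ * p₂` says that the word splits after `p₁.length` letters, and each factor is
then recovered from its part of the word and its own shape.
-/

namespace FreeSemigroup

variable {α β : Type*} (f : α → β)

theorem map_mk (x : α) (l : List α) : map f ⟨x, l⟩ = ⟨f x, l.map f⟩ := by
  induction l generalizing x with
  | nil => rfl
  | cons y l ih =>
    rw [show (⟨x, y :: l⟩ : FreeSemigroup α) = of x * ⟨y, l⟩ from rfl, map_mul, ih]
    rfl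

theorem exists_eq_of_of_map_eq_of {s : FreeSemigroup α} {y : β} (h : map f s = of y) :
    ∃ x, s = of x ∧ f x = y := by
  obtain ⟨x, l⟩ := s
  rw [map_mk, of, mk.injEq, List.map_eq_nil_iff] at h
  exact ⟨x, by rw [h.2]; rfl, h.1⟩

theorem exists_eq_mul_of_map_eq_mul {s : FreeSemigroup α} {t₁ t₂ : FreeSemigroup β}
    (h : map f s = t₁ * t₂) : ∃ s₁ s₂, s = s₁ * s₂ ∧ map f s₁ = t₁ ∧ map f s₂ = t₂ := by
  obtain ⟨x, l⟩ := s
  obtain ⟨y₁, l₁⟩ := t₁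
  obtain ⟨y₂, l₂⟩ := t₂
  rw [map_mk, mk_mul_mk, mk.injEq, List.map_eq_append_iff] at h
  obtain ⟨hx, L₁, L₂, rfl, hL₁, hL₂⟩ := h
  obtain ⟨z, L₂, rfl, hz, hL₂⟩ := List.map_eq_cons_iff.mp hL₂
  exact ⟨⟨x, L₁⟩, ⟨z, L₂⟩, rfl, by rw [map_mk, hx, hL₁], by rw [map_mk, hz, hL₂]⟩

theorem mul_inj_of_length_eq {a b c d : FreeSemigroup α} (h : a * b = c * d)
    (hl : a.length = c.length) : a = c ∧ b = d := by
  obtain ⟨x, l⟩ := a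
  obtain ⟨y, m⟩ := b
  obtain ⟨x', l'⟩ := c
  obtain ⟨y', m'⟩ := d
  rw [mk_mul_mk, mk_mul_mk, mk.injEq] at h
  obtain ⟨rfl, h⟩ := h
  obtain ⟨rfl, hym⟩ := List.append_inj h (Nat.succ_inj.mp hl)
  obtain ⟨rfl, rfl⟩ := List.cons_eq_cons.mp hym
  exact ⟨rfl, rfl⟩

end FreeSemigroup

namespace FreeMagma

variable {α β : Type*} (f : α → β)

theorem length_map (m : FreeMagma α) : (map f m).length = m.length := by
  induction m with
  | ih1 x => rfl
  | ih2 a b iha ihb => rw [map_mul]; exact congrArg₂ (· + ·) iha ihb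

theorem exists_toFreeSemigroup_eq_and_map_eq (p : FreeMagma β) {s : FreeSemigroup α}
    (h : FreeSemigroup.map f s = toFreeSemigroup p) :
    ∃ m, toFreeSemigroup m = s ∧ map f m = p := by
  induction p generalizing s with
  | ih1 y =>
    obtain ⟨x, rfl, rfl⟩ := FreeSemigroup.exists_eq_of_of_map_eq_of f h
    exact ⟨of x, rfl, rfl⟩
  | ih2 p₁ p₂ ih₁ ih₂ =>
    rw [map_mul] at h
    obtain ⟨s₁, s₂, rfl, h₁, h₂⟩ := FreeSemigroup.exists_eq_mul_of_map_eq_mul f h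
    obtain ⟨m₁, rfl, rfl⟩ := ih₁ h₁
    obtain ⟨m₂, rfl, rfl⟩ := ih₂ h₂
    exact ⟨m₁ * m₂, map_mul _ _ _, map_mul _ _ _⟩

theorem eq_of_toFreeSemigroup_eq_of_map_eq {m m' : FreeMagma α}
    (hw : toFreeSemigroup m = toFreeSemigroup m') (hP : map f m = map f m') : m = m' := by
  induction m generalizing m' with
  | ih1 x =>
    cases m' using FreeMagma.recOnMul with
    | ih1 x' => exact congrArg of (congrArg FreeSemigroup.head hw)
    | ih2 => cases hP
  | ih2 a b iha ihb =>
    cases m' using FreeMagma.recOnMul with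
    | ih1 => cases hP
    | ih2 a' b' =>
      rw [map_mul, map_mul] at hP
      injection hP with hPa hPb
      rw [map_mul, map_mul] at hw
      have hl : (toFreeSemigroup a).length = (toFreeSemigroup a').length := by
        rw [length_toFreeSemigroup, length_toFreeSemigroup, ← length_map f, hPa, length_map]
      obtain ⟨hwa, hwb⟩ := FreeSemigroup.mul_inj_of_length_eq hw hl
      rw [iha hwa hPa, ihb hwb hPb]

theorem existsUnique_toFreeSemigroup_eq_and_map_eq (p : FreeMagma β) {s : FreeSemigroup α}
    (h : FreeSemigroup.map f s = toFreeSemigroup p) :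
    ∃! m, toFreeSemigroup m = s ∧ map f m = p := by
  obtain ⟨m, hm⟩ := exists_toFreeSemigroup_eq_and_map_eq f p h
  refine ⟨m, hm, fun m' hm' => ?_⟩
  exact eq_of_toFreeSemigroup_eq_of_map_eq f (hm'.1.trans hm.1.symm) (hm'.2.trans hm.2.symm)

end FreeMagma

/-- Section 4.1: the free magma on `X` is the fibered product of the free
semigroup on `X` and the free magma on one generator over the free semigroup on
one generator.  Here `w = FreeMagma.lift FreeSemigroup.of` records the underlying
word of a parenthesized word, `P = FreeMagma.map (fun _ => PUnit.unit)` its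
parenthesization, and the square with `FreeSemigroup.map (fun _ => PUnit.unit)`
and `w₀ = FreeMagma.lift FreeSemigroup.of : FreeMagma PUnit → FreeSemigroup PUnit`
is Cartesian. -/
theorem freeMagma_fibered_product (X : Type*) (s : FreeSemigroup X)
    (p : FreeMagma PUnit)
    (h : FreeSemigroup.map (fun _ : X => PUnit.unit) s =
      FreeMagma.lift FreeSemigroup.of p) :
    ∃! m : FreeMagma X,
      FreeMagma.lift FreeSemigroup.of m = s ∧
        FreeMagma.map (fun _ : X => PUnit.unit) m = p :=
  FreeMagma.existsUnique_toFreeSemigroup_eq_and_map_eq _ p h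
end
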